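/- arXiv:2305.18040 — 8 statements merged into one kernel-verified Lean document; each statement's English description precedes it below -/
import Mathlib

section
/- Assume in addition that H·ξ ≠ 0 and ξ×H ≠ 0. Then 0 < c_s²(ξ) < (H·ξ)²/ρ < c_f²(ξ); in particular c_s²(ξ) ≠ c_f²(ξ) and the values c_s²(ξ), (H·ξ)²/ρ, c_f²(ξ) are pairwise distinct and positive. -/
/-!
`c_s²(ξ)` and `c_f²(ξ)` are the two roots of `q(X) = X² - (c² + h²)|ξ|² X + c²|ξ|² a` with
`a = (H·ξ)²/ρ`, since Lagrange's identity gives `h²|ξ|² = a + b²(ξ)`. The same identity gives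
`q(a) = -a b²(ξ) < 0`, so `a` lies strictly between the roots; and since `q(0) > 0` while the sum
of the roots is positive, the smaller root is positive too.
-/

open Matrix

noncomputable section

/-- Euclidean dot product on `ℝ³`. -/
def dot3 (a b : Fin 3 → ℝ) : ℝ := a 0 * b 0 + a 1 * b 1 + a 2 * b 2

/-- Cross product on `ℝ³`. -/
def cross3 (a b : Fin 3 → ℝ) : Fin 3 → ℝ :=
  ![a 1 * b 2 - a 2 * b 1, a 2 * b 0 - a 0 * b 2, a 0 * b 1 - a 1 * b 0]

/-- The sound speed squared `c² = γp/ρ`. -/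
def csq (ρ γ p : ℝ) : ℝ := γ * p / ρ

/-- The Alfvén speed squared `h² = |H|²/ρ`. -/
def hsq (ρ : ℝ) (H : Fin 3 → ℝ) : ℝ := dot3 H H / ρ

/-- `b²(ξ) = |ξ×H|²/ρ`. -/
def bsq (ρ : ℝ) (H ξ : Fin 3 → ℝ) : ℝ := dot3 (cross3 ξ H) (cross3 ξ H) / ρ

/-- The slow magnetosonic speed squared `c_s²(ξ)`. -/
def cs2 (ρ γ p : ℝ) (H ξ : Fin 3 → ℝ) : ℝ :=
  ((csq ρ γ p + hsq ρ H) * dot3 ξ ξ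
    - Real.sqrt ((csq ρ γ p - hsq ρ H) ^ 2 * (dot3 ξ ξ) ^ 2
        + 4 * bsq ρ H ξ * csq ρ γ p * dot3 ξ ξ)) / 2

/-- The fast magnetosonic speed squared `c_f²(ξ)`. -/
def cf2 (ρ γ p : ℝ) (H ξ : Fin 3 → ℝ) : ℝ :=
  ((csq ρ γ p + hsq ρ H) * dot3 ξ ξ
    + Real.sqrt ((csq ρ γ p - hsq ρ H) ^ 2 * (dot3 ξ ξ) ^ 2
        + 4 * bsq ρ H ξ * csq ρ γ p * dot3 ξ ξ)) / 2

lemma dot3_eq_dotProduct (a b : Fin 3 → ℝ) : dot3 a b = a ⬝ᵥ b := by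
  rw [vec3_dotProduct, dot3]

lemma cross3_eq_crossProduct (a b : Fin 3 → ℝ) : cross3 a b = a ⨯₃ b := rfl

lemma dot3_comm (a b : Fin 3 → ℝ) : dot3 a b = dot3 b a := by
  simp only [dot3_eq_dotProduct, dotProduct_comm]

lemma dot3_self_nonneg (v : Fin 3 → ℝ) : 0 ≤ dot3 v v := by
  rw [dot3_eq_dotProduct]
  exact Finset.sum_nonneg fun i _ => mul_self_nonneg (v i)

lemma dot3_self_pos {v : Fin 3 → ℝ} (hv : v ≠ 0) : 0 < dot3 v v :=
  (dot3_self_nonneg v).lt_of_ne' <| by rwa [dot3_eq_dotProduct, Ne, dotProduct_self_eq_zero]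

lemma dot3_cross3_self (a b : Fin 3 → ℝ) :
    dot3 (cross3 a b) (cross3 a b) = dot3 a a * dot3 b b - dot3 a b ^ 2 := by
  simp only [dot3_eq_dotProduct, cross3_eq_crossProduct, cross_dot_cross, dotProduct_comm b a]
  ring

section QuadraticRoots

variable {B C : ℝ}

lemma between_roots_of_quadratic_neg {a : ℝ} (h : a ^ 2 - B * a + C < 0) :
    (B - √(B ^ 2 - 4 * C)) / 2 < a ∧ a < (B + √(B ^ 2 - 4 * C)) / 2 := by
  have hlt : |2 * a - B| < √(B ^ 2 - 4 * C) := by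
    rw [← Real.sqrt_sq_eq_abs]
    exact Real.sqrt_lt_sqrt (sq_nonneg _) (by linear_combination 4 * h)
  obtain ⟨hlo, hhi⟩ := abs_lt.mp hlt
  constructor <;> linarith

lemma quadratic_root_sub_pos (hB : 0 < B) (hC : 0 < C) : 0 < (B - √(B ^ 2 - 4 * C)) / 2 := by
  have : √(B ^ 2 - 4 * C) < B := (Real.sqrt_lt' hB).mpr (by linarith)
  linarith

end QuadraticRoots

section Magnetosonic

variable (ρ γ p : ℝ) (H ξ : Fin 3 → ℝ)

lemma hsq_mul_dot3_self : hsq ρ H * dot3 ξ ξ = dot3 H ξ ^ 2 / ρ + bsq ρ H ξ := by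
  rw [hsq, bsq, dot3_cross3_self, dot3_comm ξ H]
  ring

lemma magnetosonic_discrim :
    (csq ρ γ p - hsq ρ H) ^ 2 * dot3 ξ ξ ^ 2 + 4 * bsq ρ H ξ * csq ρ γ p * dot3 ξ ξ =
      ((csq ρ γ p + hsq ρ H) * dot3 ξ ξ) ^ 2 -
        4 * (csq ρ γ p * dot3 ξ ξ * (dot3 H ξ ^ 2 / ρ)) := by
  linear_combination (-4 * csq ρ γ p * dot3 ξ ξ) * hsq_mul_dot3_self ρ H ξ

lemma magnetosonic_quadratic_eval :
    (dot3 H ξ ^ 2 / ρ) ^ 2 - (csq ρ γ p + hsq ρ H) * dot3 ξ ξ * (dot3 H ξ ^ 2 / ρ) +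
        csq ρ γ p * dot3 ξ ξ * (dot3 H ξ ^ 2 / ρ) =
      -(dot3 H ξ ^ 2 / ρ * bsq ρ H ξ) := by
  linear_combination (-(dot3 H ξ ^ 2 / ρ)) * hsq_mul_dot3_self ρ H ξ

end Magnetosonic

/-- If `H·ξ ≠ 0` and `ξ×H ≠ 0`, then `0 < c_s²(ξ) < (H·ξ)²/ρ < c_f²(ξ)`; in
particular `c_s²(ξ) ≠ c_f²(ξ)` and the three values are pairwise distinct and
positive. -/
theorem stmt0 (ρ γ p : ℝ) (H ξ : Fin 3 → ℝ)
    (hρ : 0 < ρ) (hγp : 0 < γ * p)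
    (hHξ : dot3 H ξ ≠ 0) (hcross : cross3 ξ H ≠ 0) :
    0 < cs2 ρ γ p H ξ ∧ cs2 ρ γ p H ξ < (dot3 H ξ) ^ 2 / ρ ∧
      (dot3 H ξ) ^ 2 / ρ < cf2 ρ γ p H ξ ∧ cs2 ρ γ p H ξ ≠ cf2 ρ γ p H ξ := by
  have hc : 0 < csq ρ γ p := div_pos hγp hρ
  have hh : 0 ≤ hsq ρ H := div_nonneg (dot3_self_nonneg H) hρ.le
  have hb : 0 < bsq ρ H ξ := div_pos (dot3_self_pos hcross) hρ
  have ha : 0 < dot3 H ξ ^ 2 / ρ := by positivity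
  have hS : 0 < dot3 ξ ξ := dot3_self_pos <| by rintro rfl; simp [dot3] at hHξ
  have hq := magnetosonic_quadratic_eval ρ γ p H ξ ▸ neg_neg_of_pos (mul_pos ha hb)
  obtain ⟨hlo, hhi⟩ := between_roots_of_quadratic_neg hq
  rw [cs2, cf2, magnetosonic_discrim]
  exact ⟨quadratic_root_sub_pos (by positivity) (by positivity), hlo, hhi, (hlo.trans hhi).ne⟩
end
end

section
/- For every τ ∈ ℝ and ξ ∈ ℝ³, det p₂(τ,ξ) = (ρτ² − (H·ξ)²)·ρ²·(τ² − c_s²(ξ))·(τ² − c_f²(ξ)); equivalently, det p₂(τ,ξ) = (ρτ² − (H·ξ)²)·(ρ²τ⁴ − ρ(γp+|H|²)|ξ|²τ² + γp(H·ξ)²|ξ|²). -/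
open Matrix

noncomputable section

/-- The principal symbol `p₂(τ,ξ)` of the ideal MHD wave operator. -/
def p2 (ρ γ p τ : ℝ) (H ξ : Fin 3 → ℝ) : Matrix (Fin 3) (Fin 3) ℝ :=
  (ρ * τ ^ 2 - (dot3 H ξ) ^ 2) • (1 : Matrix (Fin 3) (Fin 3) ℝ)
    - (γ * p + dot3 H H) • vecMulVec ξ ξ
    + (dot3 H ξ) • (vecMulVec ξ H + vecMulVec H ξ)

/-- `det p₂(τ,ξ) = (ρτ² − (H·ξ)²)·ρ²·(τ² − c_s²(ξ))·(τ² − c_f²(ξ))`;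
equivalently `det p₂(τ,ξ) = (ρτ² − (H·ξ)²)·(ρ²τ⁴ − ρ(γp+|H|²)|ξ|²τ² + γp(H·ξ)²|ξ|²)`. -/
theorem stmt2 (ρ γ p : ℝ) (H : Fin 3 → ℝ) (hρ : 0 < ρ) (hγp : 0 < γ * p) :
    ∀ (τ : ℝ) (ξ : Fin 3 → ℝ),
      (p2 ρ γ p τ H ξ).det
          = (ρ * τ ^ 2 - (dot3 H ξ) ^ 2) * ρ ^ 2
              * (τ ^ 2 - cs2 ρ γ p H ξ) * (τ ^ 2 - cf2 ρ γ p H ξ) ∧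
      (p2 ρ γ p τ H ξ).det
          = (ρ * τ ^ 2 - (dot3 H ξ) ^ 2)
              * (ρ ^ 2 * τ ^ 4 - ρ * (γ * p + dot3 H H) * dot3 ξ ξ * τ ^ 2
                  + γ * p * (dot3 H ξ) ^ 2 * dot3 ξ ξ) := by
  intro τ ξ
  have hdet : (p2 ρ γ p τ H ξ).det
      = (ρ * τ ^ 2 - (dot3 H ξ) ^ 2)
          * (ρ ^ 2 * τ ^ 4 - ρ * (γ * p + dot3 H H) * dot3 ξ ξ * τ ^ 2
              + γ * p * (dot3 H ξ) ^ 2 * dot3 ξ ξ) := by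
    rw [Matrix.det_fin_three]
    simp [p2, dot3, vecMulVec, Matrix.one_apply, Matrix.smul_apply, Matrix.sub_apply,
      Matrix.add_apply]
    ring
  refine ⟨?_, hdet⟩
  rw [hdet]
  set D := (csq ρ γ p - hsq ρ H) ^ 2 * (dot3 ξ ξ) ^ 2
      + 4 * bsq ρ H ξ * csq ρ γ p * dot3 ξ ξ with hD
  have hb0 : 0 ≤ dot3 (cross3 ξ H) (cross3 ξ H) := by
    unfold dot3 cross3
    simp only [Matrix.cons_val_zero, Matrix.cons_val_one, Matrix.head_cons,
      Matrix.cons_val_two, Matrix.tail_cons]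
    nlinarith [mul_self_nonneg (ξ 1 * H 2 - ξ 2 * H 1),
      mul_self_nonneg (ξ 2 * H 0 - ξ 0 * H 2), mul_self_nonneg (ξ 0 * H 1 - ξ 1 * H 0)]
  have hb : 0 ≤ bsq ρ H ξ := div_nonneg hb0 hρ.le
  have hc : 0 ≤ csq ρ γ p := div_nonneg hγp.le hρ.le
  have hxx : 0 ≤ dot3 ξ ξ := by
    unfold dot3
    nlinarith [mul_self_nonneg (ξ 0), mul_self_nonneg (ξ 1), mul_self_nonneg (ξ 2)]
  have hD0 : 0 ≤ D := by
    rw [hD]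
    exact add_nonneg (mul_nonneg (sq_nonneg _) (sq_nonneg _))
      (mul_nonneg (mul_nonneg (mul_nonneg (by norm_num) hb) hc) hxx)
  have hs2 : (Real.sqrt D) ^ 2 = D := Real.sq_sqrt hD0
  have hs2' : ρ ^ 2 * (Real.sqrt D) ^ 2
      = (γ * p - dot3 H H) ^ 2 * (dot3 ξ ξ) ^ 2
        + 4 * (dot3 (cross3 ξ H) (cross3 ξ H)) * (γ * p) * dot3 ξ ξ := by
    rw [hs2, hD]
    unfold csq hsq bsq
    field_simp
  have hcross : dot3 (cross3 ξ H) (cross3 ξ H)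
      = dot3 ξ ξ * dot3 H H - (dot3 H ξ) ^ 2 := by
    unfold dot3 cross3
    simp [Matrix.cons_val_zero, Matrix.cons_val_one]
    ring
  have hcs : cs2 ρ γ p H ξ
      = ((csq ρ γ p + hsq ρ H) * dot3 ξ ξ - Real.sqrt D) / 2 := rfl
  have hcf : cf2 ρ γ p H ξ
      = ((csq ρ γ p + hsq ρ H) * dot3 ξ ξ + Real.sqrt D) / 2 := rfl
  rw [hcs, hcf]
  unfold csq hsq
  field_simp
  linear_combination (ρ * τ ^ 2 - dot3 H ξ ^ 2) * hs2'
    + ((ρ * τ ^ 2 - dot3 H ξ ^ 2) * 4 * (γ * p) * dot3 ξ ξ) * hcross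
end
end

section
/- Assume in addition that H·ξ ≠ 0 and ξ×H ≠ 0. Define π₁(ξ) = Id₃ + ((H·ξ)² − |H|²|ξ|²)⁻¹·w²(ξ), π₂(ξ) = (ρc_s²(ξ) − ρc_f²(ξ))⁻¹·[ (γp+|H|²)(ξ⊗ξ) − (H·ξ)(ξ⊗H + H⊗ξ) + (H·ξ)²·(ρc_s²(ξ) − (H·ξ)²)⁻¹·w²(ξ) ], and π₃(ξ) = (ρc_f²(ξ) − ρc_s²(ξ))⁻¹·[ (γp+|H|²)(ξ⊗ξ) − (H·ξ)(ξ⊗H + H⊗ξ) + (H·ξ)²·(ρc_f²(ξ) − (H·ξ)²)⁻¹·w²(ξ) ] (all denominators are nonzero since 0 < c_s²(ξ) < (H·ξ)²/ρ < c_f²(ξ)). Then π₁, π₂, π₃ are symmetric, πᵢπⱼ = 0 for i ≠ j, πᵢ² = πᵢ, π₁ + π₂ + π₃ = Id₃, and for every τ ∈ ℝ one has p₂(τ,ξ) = (ρτ² − (H·ξ)²)·π₁(ξ) + ρ(τ² − c_s²(ξ))·π₂(ξ) + ρ(τ² − c_f²(ξ))·π₃(ξ). -/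
open Matrix

noncomputable section

/-- `w²(ξ) = |H|²·(ξ⊗ξ) + |ξ|²·(H⊗H) − (H·ξ)·(H⊗ξ + ξ⊗H)`. -/
def w2 (H ξ : Fin 3 → ℝ) : Matrix (Fin 3) (Fin 3) ℝ :=
  (dot3 H H) • vecMulVec ξ ξ + (dot3 ξ ξ) • vecMulVec H H
    - (dot3 H ξ) • (vecMulVec H ξ + vecMulVec ξ H)

/-- `π₁(ξ) = Id₃ + ((H·ξ)² − |H|²|ξ|²)⁻¹·w²(ξ)`. -/
def pi1 (H ξ : Fin 3 → ℝ) : Matrix (Fin 3) (Fin 3) ℝ :=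
  (1 : Matrix (Fin 3) (Fin 3) ℝ)
    + ((dot3 H ξ) ^ 2 - dot3 H H * dot3 ξ ξ)⁻¹ • w2 H ξ

/-- `π₂(ξ)`, the slow magnetosonic projection. -/
def pi2 (ρ γ p : ℝ) (H ξ : Fin 3 → ℝ) : Matrix (Fin 3) (Fin 3) ℝ :=
  (ρ * cs2 ρ γ p H ξ - ρ * cf2 ρ γ p H ξ)⁻¹ •
    ((γ * p + dot3 H H) • vecMulVec ξ ξ
      - (dot3 H ξ) • (vecMulVec ξ H + vecMulVec H ξ)
      + ((dot3 H ξ) ^ 2 * (ρ * cs2 ρ γ p H ξ - (dot3 H ξ) ^ 2)⁻¹) • w2 H ξ)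

/-- `π₃(ξ)`, the fast magnetosonic projection. -/
def pi3 (ρ γ p : ℝ) (H ξ : Fin 3 → ℝ) : Matrix (Fin 3) (Fin 3) ℝ :=
  (ρ * cf2 ρ γ p H ξ - ρ * cs2 ρ γ p H ξ)⁻¹ •
    ((γ * p + dot3 H H) • vecMulVec ξ ξ
      - (dot3 H ξ) • (vecMulVec ξ H + vecMulVec H ξ)
      + ((dot3 H ξ) ^ 2 * (ρ * cf2 ρ γ p H ξ - (dot3 H ξ) ^ 2)⁻¹) • w2 H ξ)

lemma mulvv (a b c d : Fin 3 → ℝ) :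
    vecMulVec a b * vecMulVec c d = dot3 b c • vecMulVec a d := by
  ext i j
  simp [vecMulVec, Matrix.mul_apply, dot3, Fin.sum_univ_three]
  ring

lemma transvv (a b : Fin 3 → ℝ) : (vecMulVec a b)ᵀ = vecMulVec b a := by
  ext i j; simp [vecMulVec, Matrix.transpose_apply]; ring

lemma dot3_pos (v : Fin 3 → ℝ) (hv : v ≠ 0) : 0 < dot3 v v := by
  rcases Function.ne_iff.mp hv with ⟨i, hi⟩
  fin_cases i <;> simp at hi <;> simp [dot3] <;>
    nlinarith [mul_self_pos.mpr hi, mul_self_nonneg (v 0), mul_self_nonneg (v 1), mul_self_nonneg (v 2)]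

lemma lagrange (H ξ : Fin 3 → ℝ) :
    dot3 (cross3 ξ H) (cross3 ξ H) = dot3 ξ ξ * dot3 H H - (dot3 H ξ)^2 := by
  simp [dot3, cross3]; ring



lemma trans1 (a k m : ℝ) (H ξ : Fin 3 → ℝ) : (((1 : Matrix (Fin 3) (Fin 3) ℝ) + (a ^ 2 - m * k)⁻¹ • (m • vecMulVec ξ ξ + k • vecMulVec H H - a • (vecMulVec H ξ + vecMulVec ξ H))))ᵀ = ((1 : Matrix (Fin 3) (Fin 3) ℝ) + (a ^ 2 - m * k)⁻¹ • (m • vecMulVec ξ ξ + k • vecMulVec H H - a • (vecMulVec H ξ + vecMulVec ξ H))) := by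
  simp only [transpose_add, transpose_sub, transpose_smul, transpose_one, transvv]
  module

lemma trans2 (g a k m s f : ℝ) (H ξ : Fin 3 → ℝ) : (((s - f)⁻¹ • ((g + m) • vecMulVec ξ ξ - a • (vecMulVec ξ H + vecMulVec H ξ) + (a ^ 2 * (s - a ^ 2)⁻¹) • (m • vecMulVec ξ ξ + k • vecMulVec H H - a • (vecMulVec H ξ + vecMulVec ξ H)))))ᵀ = ((s - f)⁻¹ • ((g + m) • vecMulVec ξ ξ - a • (vecMulVec ξ H + vecMulVec H ξ) + (a ^ 2 * (s - a ^ 2)⁻¹) • (m • vecMulVec ξ ξ + k • vecMulVec H H - a • (vecMulVec H ξ + vecMulVec ξ H)))) := by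
  simp only [transpose_add, transpose_sub, transpose_smul, transpose_one, transvv]
  module


set_option maxHeartbeats 1000000 in
lemma hWY (g a k m s : ℝ) (H ξ : Fin 3 → ℝ) (hk' : dot3 ξ ξ = k) (hm' : dot3 H H = m) (ha' : dot3 H ξ = a) (ha'' : dot3 ξ H = a) :
    (m • vecMulVec ξ ξ + k • vecMulVec H H - a • (vecMulVec H ξ + vecMulVec ξ H)) * ((s - a ^ 2) • ((g + m) • vecMulVec ξ ξ - a • (vecMulVec ξ H + vecMulVec H ξ)) + a ^ 2 • (m • vecMulVec ξ ξ + k • vecMulVec H H - a • (vecMulVec H ξ + vecMulVec ξ H))) = (m * k - a ^ 2) • ((s - a ^ 2) • ((g + m) • vecMulVec ξ ξ - a • (vecMulVec ξ H + vecMulVec H ξ)) + a ^ 2 • (m • vecMulVec ξ ξ + k • vecMulVec H H - a • (vecMulVec H ξ + vecMulVec ξ H))) := by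
  simp only [Matrix.add_mul, Matrix.mul_add, Matrix.sub_mul, Matrix.mul_sub,
    smul_mul_assoc, mul_smul_comm, mulvv, Matrix.one_mul, Matrix.mul_one,
    smul_smul, smul_add, smul_sub, hk', hm', ha', ha'']
  match_scalars <;> ring

set_option maxHeartbeats 1000000 in
lemma hYW (g a k m s : ℝ) (H ξ : Fin 3 → ℝ) (hk' : dot3 ξ ξ = k) (hm' : dot3 H H = m) (ha' : dot3 H ξ = a) (ha'' : dot3 ξ H = a) :
    ((s - a ^ 2) • ((g + m) • vecMulVec ξ ξ - a • (vecMulVec ξ H + vecMulVec H ξ)) + a ^ 2 • (m • vecMulVec ξ ξ + k • vecMulVec H H - a • (vecMulVec H ξ + vecMulVec ξ H))) * (m • vecMulVec ξ ξ + k • vecMulVec H H - a • (vecMulVec H ξ + vecMulVec ξ H)) = (m * k - a ^ 2) • ((s - a ^ 2) • ((g + m) • vecMulVec ξ ξ - a • (vecMulVec ξ H + vecMulVec H ξ)) + a ^ 2 • (m • vecMulVec ξ ξ + k • vecMulVec H H - a • (vecMulVec H ξ + vecMulVec ξ H))) := by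
  simp only [Matrix.add_mul, Matrix.mul_add, Matrix.sub_mul, Matrix.mul_sub,
    smul_mul_assoc, mul_smul_comm, mulvv, Matrix.one_mul, Matrix.mul_one,
    smul_smul, smul_add, smul_sub, hk', hm', ha', ha'']
  match_scalars <;> ring

set_option maxHeartbeats 1000000 in
lemma hYid (g a k m s : ℝ) (H ξ : Fin 3 → ℝ) (hsa : s - a ^ 2 ≠ 0) :
    ((g + m) • vecMulVec ξ ξ - a • (vecMulVec ξ H + vecMulVec H ξ) + (a ^ 2 * (s - a ^ 2)⁻¹) • (m • vecMulVec ξ ξ + k • vecMulVec H H - a • (vecMulVec H ξ + vecMulVec ξ H))) = (s - a ^ 2)⁻¹ • ((s - a ^ 2) • ((g + m) • vecMulVec ξ ξ - a • (vecMulVec ξ H + vecMulVec H ξ)) + a ^ 2 • (m • vecMulVec ξ ξ + k • vecMulVec H H - a • (vecMulVec H ξ + vecMulVec ξ H))) := by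
  match_scalars <;> field_simp <;> ring


set_option maxHeartbeats 2000000 in
lemma Ymul (g a k m s f : ℝ) (H ξ : Fin 3 → ℝ) (hsum : s + f = (g + m) * k) (hprod : s * f = g * k * a ^ 2)
    (hk' : dot3 ξ ξ = k) (hm' : dot3 H H = m) (ha' : dot3 H ξ = a) (ha'' : dot3 ξ H = a) :
    ((s - a ^ 2) • ((g + m) • vecMulVec ξ ξ - a • (vecMulVec ξ H + vecMulVec H ξ)) + a ^ 2 • (m • vecMulVec ξ ξ + k • vecMulVec H H - a • (vecMulVec H ξ + vecMulVec ξ H))) * ((f - a ^ 2) • ((g + m) • vecMulVec ξ ξ - a • (vecMulVec ξ H + vecMulVec H ξ)) + a ^ 2 • (m • vecMulVec ξ ξ + k • vecMulVec H H - a • (vecMulVec H ξ + vecMulVec ξ H))) = 0 := by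
  simp only [Matrix.add_mul, Matrix.mul_add, Matrix.sub_mul, Matrix.mul_sub,
    smul_mul_assoc, mul_smul_comm, mulvv, Matrix.one_mul, Matrix.mul_one,
    smul_smul, smul_add, smul_sub, hk', hm', ha', ha'']
  match_scalars
  · linear_combination (-1*g*a^2*k*m + g*a^4 - 1*g^2*a^2*k) * hsum + (k*m^2 - 1*a^2*m + 2*g*k*m - 2*g*a^2 + g^2*k) * hprod
  · linear_combination (g*a^3*k) * hsum + (-1*a*k*m + a^3 - 1*g*a*k) * hprod
  · linear_combination (g*a^3*k) * hsum + (-1*a*k*m + a^3 - 1*g*a*k) * hprod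
  · linear_combination (-1*a^4*k) * hsum + (a^2*k) * hprod

set_option maxHeartbeats 2000000 in
lemma Yidem (g a k m s f : ℝ) (H ξ : Fin 3 → ℝ) (hsum : s + f = (g + m) * k) (hprod : s * f = g * k * a ^ 2)
    (hk' : dot3 ξ ξ = k) (hm' : dot3 H H = m) (ha' : dot3 H ξ = a) (ha'' : dot3 ξ H = a) :
    ((s - a ^ 2) • ((g + m) • vecMulVec ξ ξ - a • (vecMulVec ξ H + vecMulVec H ξ)) + a ^ 2 • (m • vecMulVec ξ ξ + k • vecMulVec H H - a • (vecMulVec H ξ + vecMulVec ξ H))) * ((s - a ^ 2) • ((g + m) • vecMulVec ξ ξ - a • (vecMulVec ξ H + vecMulVec H ξ)) + a ^ 2 • (m • vecMulVec ξ ξ + k • vecMulVec H H - a • (vecMulVec H ξ + vecMulVec ξ H))) = ((s - f) * (s - a ^ 2)) • ((s - a ^ 2) • ((g + m) • vecMulVec ξ ξ - a • (vecMulVec ξ H + vecMulVec H ξ)) + a ^ 2 • (m • vecMulVec ξ ξ + k • vecMulVec H H - a • (vecMulVec H ξ + vecMulVec ξ H))) := by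
  simp only [Matrix.add_mul, Matrix.mul_add, Matrix.sub_mul, Matrix.mul_sub,
    smul_mul_assoc, mul_smul_comm, mulvv, Matrix.one_mul, Matrix.mul_one,
    smul_smul, smul_add, smul_sub, hk', hm', ha', ha'']
  match_scalars
  · linear_combination (-1*m*s^2 - 1*g*s^2 + g*a^4) * hsum + (2*m*s - 1*a^2*m + 2*g*s - 2*g*a^2) * hprod
  · linear_combination (a*s^2) * hsum + (-2*a*s + a^3) * hprod
  · linear_combination (a*s^2) * hsum + (-2*a*s + a^3) * hprod
  · linear_combination (-1*a^4*k) * hsum + (a^2*k) * hprod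


set_option maxHeartbeats 1000000 in
lemma mul12 (g a k m s f : ℝ) (H ξ : Fin 3 → ℝ)
    (hsf : s - f ≠ 0) (hsa : s - a ^ 2 ≠ 0) (hamk : a ^ 2 - m * k ≠ 0)
    (hk' : dot3 ξ ξ = k) (hm' : dot3 H H = m) (ha' : dot3 H ξ = a) (ha'' : dot3 ξ H = a) :
    ((1 : Matrix (Fin 3) (Fin 3) ℝ) + (a ^ 2 - m * k)⁻¹ • (m • vecMulVec ξ ξ + k • vecMulVec H H - a • (vecMulVec H ξ + vecMulVec ξ H))) * ((s - f)⁻¹ • ((g + m) • vecMulVec ξ ξ - a • (vecMulVec ξ H + vecMulVec H ξ) + (a ^ 2 * (s - a ^ 2)⁻¹) • (m • vecMulVec ξ ξ + k • vecMulVec H H - a • (vecMulVec H ξ + vecMulVec ξ H)))) = 0 := by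
  rw [hYid g a k m s H ξ hsa, smul_smul, mul_smul_comm, Matrix.add_mul, Matrix.one_mul,
    smul_mul_assoc, hWY g a k m s H ξ hk' hm' ha' ha'', smul_smul]
  rw [show (a ^ 2 - m * k)⁻¹ * (m * k - a ^ 2) = -1 by field_simp; ring]
  match_scalars <;> ring

set_option maxHeartbeats 1000000 in
lemma mul21 (g a k m s f : ℝ) (H ξ : Fin 3 → ℝ)
    (hsf : s - f ≠ 0) (hsa : s - a ^ 2 ≠ 0) (hamk : a ^ 2 - m * k ≠ 0)
    (hk' : dot3 ξ ξ = k) (hm' : dot3 H H = m) (ha' : dot3 H ξ = a) (ha'' : dot3 ξ H = a) :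
    ((s - f)⁻¹ • ((g + m) • vecMulVec ξ ξ - a • (vecMulVec ξ H + vecMulVec H ξ) + (a ^ 2 * (s - a ^ 2)⁻¹) • (m • vecMulVec ξ ξ + k • vecMulVec H H - a • (vecMulVec H ξ + vecMulVec ξ H)))) * ((1 : Matrix (Fin 3) (Fin 3) ℝ) + (a ^ 2 - m * k)⁻¹ • (m • vecMulVec ξ ξ + k • vecMulVec H H - a • (vecMulVec H ξ + vecMulVec ξ H))) = 0 := by
  rw [hYid g a k m s H ξ hsa, smul_smul, smul_mul_assoc, Matrix.mul_add, Matrix.mul_one,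
    mul_smul_comm, hYW g a k m s H ξ hk' hm' ha' ha'', smul_smul]
  rw [show (a ^ 2 - m * k)⁻¹ * (m * k - a ^ 2) = -1 by field_simp; ring]
  match_scalars <;> ring

set_option maxHeartbeats 1000000 in
lemma hWW (a k m : ℝ) (H ξ : Fin 3 → ℝ) (hk' : dot3 ξ ξ = k) (hm' : dot3 H H = m) (ha' : dot3 H ξ = a) (ha'' : dot3 ξ H = a) :
    (m • vecMulVec ξ ξ + k • vecMulVec H H - a • (vecMulVec H ξ + vecMulVec ξ H)) * (m • vecMulVec ξ ξ + k • vecMulVec H H - a • (vecMulVec H ξ + vecMulVec ξ H)) = (m * k - a ^ 2) • (m • vecMulVec ξ ξ + k • vecMulVec H H - a • (vecMulVec H ξ + vecMulVec ξ H)) := by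
  simp only [Matrix.add_mul, Matrix.mul_add, Matrix.sub_mul, Matrix.mul_sub,
    smul_mul_assoc, mul_smul_comm, mulvv, Matrix.one_mul, Matrix.mul_one,
    smul_smul, smul_add, smul_sub, hk', hm', ha', ha'']
  match_scalars <;> ring

set_option maxHeartbeats 1000000 in
lemma idem1 (a k m : ℝ) (H ξ : Fin 3 → ℝ) (hamk : a ^ 2 - m * k ≠ 0)
    (hk' : dot3 ξ ξ = k) (hm' : dot3 H H = m) (ha' : dot3 H ξ = a) (ha'' : dot3 ξ H = a) :
    ((1 : Matrix (Fin 3) (Fin 3) ℝ) + (a ^ 2 - m * k)⁻¹ • (m • vecMulVec ξ ξ + k • vecMulVec H H - a • (vecMulVec H ξ + vecMulVec ξ H))) * ((1 : Matrix (Fin 3) (Fin 3) ℝ) + (a ^ 2 - m * k)⁻¹ • (m • vecMulVec ξ ξ + k • vecMulVec H H - a • (vecMulVec H ξ + vecMulVec ξ H))) = ((1 : Matrix (Fin 3) (Fin 3) ℝ) + (a ^ 2 - m * k)⁻¹ • (m • vecMulVec ξ ξ + k • vecMulVec H H - a • (vecMulVec H ξ + vecMulVec ξ H))) := by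
  simp only [Matrix.add_mul, Matrix.mul_add, Matrix.one_mul, Matrix.mul_one,
    smul_mul_assoc, mul_smul_comm, smul_smul, hWW a k m H ξ hk' hm' ha' ha'']
  match_scalars <;> field_simp <;> ring

set_option maxHeartbeats 1000000 in
lemma mul23 (g a k m s f : ℝ) (H ξ : Fin 3 → ℝ) (hsum : s + f = (g + m) * k) (hprod : s * f = g * k * a ^ 2)
    (hsf : s - f ≠ 0) (hfs : f - s ≠ 0) (hsa : s - a ^ 2 ≠ 0) (hfa : f - a ^ 2 ≠ 0)
    (hk' : dot3 ξ ξ = k) (hm' : dot3 H H = m) (ha' : dot3 H ξ = a) (ha'' : dot3 ξ H = a) :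
    ((s - f)⁻¹ • ((g + m) • vecMulVec ξ ξ - a • (vecMulVec ξ H + vecMulVec H ξ) + (a ^ 2 * (s - a ^ 2)⁻¹) • (m • vecMulVec ξ ξ + k • vecMulVec H H - a • (vecMulVec H ξ + vecMulVec ξ H)))) * ((f - s)⁻¹ • ((g + m) • vecMulVec ξ ξ - a • (vecMulVec ξ H + vecMulVec H ξ) + (a ^ 2 * (f - a ^ 2)⁻¹) • (m • vecMulVec ξ ξ + k • vecMulVec H H - a • (vecMulVec H ξ + vecMulVec ξ H)))) = 0 := by
  rw [hYid g a k m s H ξ hsa, hYid g a k m f H ξ hfa, smul_smul, smul_smul,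
    smul_mul_assoc, mul_smul_comm, Ymul g a k m s f H ξ hsum hprod hk' hm' ha' ha'',
    smul_zero, smul_zero]

set_option maxHeartbeats 1000000 in
lemma idem2 (g a k m s f : ℝ) (H ξ : Fin 3 → ℝ) (hsum : s + f = (g + m) * k) (hprod : s * f = g * k * a ^ 2)
    (hsf : s - f ≠ 0) (hsa : s - a ^ 2 ≠ 0)
    (hk' : dot3 ξ ξ = k) (hm' : dot3 H H = m) (ha' : dot3 H ξ = a) (ha'' : dot3 ξ H = a) :
    ((s - f)⁻¹ • ((g + m) • vecMulVec ξ ξ - a • (vecMulVec ξ H + vecMulVec H ξ) + (a ^ 2 * (s - a ^ 2)⁻¹) • (m • vecMulVec ξ ξ + k • vecMulVec H H - a • (vecMulVec H ξ + vecMulVec ξ H)))) * ((s - f)⁻¹ • ((g + m) • vecMulVec ξ ξ - a • (vecMulVec ξ H + vecMulVec H ξ) + (a ^ 2 * (s - a ^ 2)⁻¹) • (m • vecMulVec ξ ξ + k • vecMulVec H H - a • (vecMulVec H ξ + vecMulVec ξ H)))) = ((s - f)⁻¹ • ((g + m) • vecMulVec ξ ξ - a • (vecMulVec ξ H + vecMulVec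 H ξ) + (a ^ 2 * (s - a ^ 2)⁻¹) • (m • vecMulVec ξ ξ + k • vecMulVec H H - a • (vecMulVec H ξ + vecMulVec ξ H)))) := by
  rw [hYid g a k m s H ξ hsa, smul_smul, smul_mul_assoc, mul_smul_comm,
    Yidem g a k m s f H ξ hsum hprod hk' hm' ha' ha'', smul_smul, smul_smul]
  congr 1
  field_simp


set_option maxHeartbeats 4000000 in
lemma sum1 (g a k m s f : ℝ) (H ξ : Fin 3 → ℝ) (hsum : s + f = (g + m) * k) (hprod : s * f = g * k * a ^ 2)
    (hsf : s - f ≠ 0) (hfs : f - s ≠ 0) (hsa : s - a ^ 2 ≠ 0) (hfa : f - a ^ 2 ≠ 0)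
    (hamk : a ^ 2 - m * k ≠ 0)
    (hk' : dot3 ξ ξ = k) (hm' : dot3 H H = m) (ha' : dot3 H ξ = a) (ha'' : dot3 ξ H = a) :
    ((1 : Matrix (Fin 3) (Fin 3) ℝ) + (a ^ 2 - m * k)⁻¹ • (m • vecMulVec ξ ξ + k • vecMulVec H H - a • (vecMulVec H ξ + vecMulVec ξ H))) + ((s - f)⁻¹ • ((g + m) • vecMulVec ξ ξ - a • (vecMulVec ξ H + vecMulVec H ξ) + (a ^ 2 * (s - a ^ 2)⁻¹) • (m • vecMulVec ξ ξ + k • vecMulVec H H - a • (vecMulVec H ξ + vecMulVec ξ H)))) + ((f - s)⁻¹ • ((g + m) • vecMulVec ξ ξ - a • (vecMulVec ξ H + vecMulVec H ξ) + (a ^ 2 * (f - a ^ 2)⁻¹) • (m • vecMulVec ξ ξ + k • vecMulVec H H - a • (vecMulVec H ξ + vecMulVec ξ H)))) = 1 := by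
  match_scalars
  all_goals field_simp
  · linear_combination (-1*m*s*f^2 + 3*m*s^2*f - 1*k*m^2*s*f + a^2*m*f^2 - 2*a^2*m*s*f + a^2*m*s^2 - 1*g*k*m*s*f + g*a^2*k*m*f - 3*g*a^2*k*m*s + g*a^2*k^2*m^2 + g^2*a^2*k^2*m) * hsum + (-4*m*s^2 + 4*k*m^2*s - 1*k^2*m^3 + 4*g*k*m*s - 2*g*k^2*m^2 - 1*g^2*k^2*m) * hprod
  · linear_combination (-1*k*s*f^2 + 3*k*s^2*f - 1*k^2*m*s*f + a^2*k*f^2 - 2*a^2*k*s*f + a^2*k*s^2 - 1*g*k^2*s*f + g*a^2*k^2*f - 3*g*a^2*k^2*s + g*a^2*k^3*m + g^2*a^2*k^3) * hsum + (-4*k*s^2 + 4*k^2*m*s - 1*k^3*m^2 + 4*g*k^2*s - 2*g*k^3*m - 1*g^2*k^3) * hprod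
  · linear_combination (a*s*f^2 - 3*a*s^2*f + a*k*m*s*f - 1*a^3*f^2 + 2*a^3*s*f - 1*a^3*s^2 + g*a*k*s*f - 1*g*a^3*k*f + 3*g*a^3*k*s - 1*g*a^3*k^2*m - 1*g^2*a^3*k^2) * hsum + (4*a*s^2 - 4*a*k*m*s + a*k^2*m^2 - 4*g*a*k*s + 2*g*a*k^2*m + g^2*a*k^2) * hprod
  · linear_combination (a*s*f^2 - 3*a*s^2*f + a*k*m*s*f - 1*a^3*f^2 + 2*a^3*s*f - 1*a^3*s^2 + g*a*k*s*f - 1*g*a^3*k*f + 3*g*a^3*k*s - 1*g*a^3*k^2*m - 1*g^2*a^3*k^2) * hsum + (4*a*s^2 - 4*a*k*m*s + a*k^2*m^2 - 4*g*a*k*s + 2*g*a*k^2*m + g^2*a*k^2) * hprod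

set_option maxHeartbeats 4000000 in
lemma decom (g a k m s f t : ℝ) (H ξ : Fin 3 → ℝ) (hsum : s + f = (g + m) * k) (hprod : s * f = g * k * a ^ 2)
    (hsf : s - f ≠ 0) (hfs : f - s ≠ 0) (hsa : s - a ^ 2 ≠ 0) (hfa : f - a ^ 2 ≠ 0)
    (hamk : a ^ 2 - m * k ≠ 0)
    (hk' : dot3 ξ ξ = k) (hm' : dot3 H H = m) (ha' : dot3 H ξ = a) (ha'' : dot3 ξ H = a) :
    (t - a ^ 2) • (1 : Matrix (Fin 3) (Fin 3) ℝ) - (g + m) • vecMulVec ξ ξ + a • (vecMulVec ξ H + vecMulVec H ξ)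
      = (t - a ^ 2) • ((1 : Matrix (Fin 3) (Fin 3) ℝ) + (a ^ 2 - m * k)⁻¹ • (m • vecMulVec ξ ξ + k • vecMulVec H H - a • (vecMulVec H ξ + vecMulVec ξ H))) + (t - s) • ((s - f)⁻¹ • ((g + m) • vecMulVec ξ ξ - a • (vecMulVec ξ H + vecMulVec H ξ) + (a ^ 2 * (s - a ^ 2)⁻¹) • (m • vecMulVec ξ ξ + k • vecMulVec H H - a • (vecMulVec H ξ + vecMulVec ξ H)))) + (t - f) • ((f - s)⁻¹ • ((g + m) • vecMulVec ξ ξ - a • (vecMulVec ξ H + vecMulVec H ξ) + (a ^ 2 * (f - a ^ 2)⁻¹) • (m • vecMulVec ξ ξ + k • vecMulVec H H - a • (vecMulVec H ξ + vecMulVec ξ H)))) := by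
  match_scalars
  all_goals field_simp
  · linear_combination (m*s*f^2*t - 3*m*s^2*f*t + k*m^2*s*f*t - 1*a^2*m*f^2*t + 2*a^2*m*s*f*t - 1*a^2*m*s*f^2 - 1*a^2*m*s^2*t + 3*a^2*m*s^2*f - 1*a^2*k*m^2*s*f + a^4*m*f^2 - 2*a^4*m*s*f + a^4*m*s^2 + g*k*m*s*f*t - 1*g*a^2*k*m*f*t + 3*g*a^2*k*m*s*t - 1*g*a^2*k*m*s*f - 1*g*a^2*k^2*m^2*t + g*a^4*k*m*f - 3*g*a^4*k*m*s + g*a^4*k^2*m^2 - 1*g^2*a^2*k^2*m*t + g^2*a^4*k^2*m) * hsum + (4*m*s^2*t - 4*k*m^2*s*t + k^2*m^3*t - 4*a^2*m*s^2 + 4*a^2*k*m^2*s - 1*a^2*k^2*m^3 - 4*g*k*m*s*t + 2*g*k^2*m^2*t + 4*g*a^2*k*m*s - 2*g*a^2*k^2*m^2 + g^2*k^2*m*t - 1*g^2*a^2*k^2*m) * hprod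
  · linear_combination (-1*a*s*f^2*t + 3*a*s^2*f*t - 1*a*k*m*s*f*t + a^3*f^2*t - 2*a^3*s*f*t + a^3*s*f^2 + a^3*s^2*t - 3*a^3*s^2*f + a^3*k*m*s*f - 1*a^5*f^2 + 2*a^5*s*f - 1*a^5*s^2 - 1*g*a*k*s*f*t + g*a^3*k*f*t - 3*g*a^3*k*s*t + g*a^3*k*s*f + g*a^3*k^2*m*t - 1*g*a^5*k*f + 3*g*a^5*k*s - 1*g*a^5*k^2*m + g^2*a^3*k^2*t - 1*g^2*a^5*k^2) * hsum + (-4*a*s^2*t + 4*a*k*m*s*t - 1*a*k^2*m^2*t + 4*a^3*s^2 - 4*a^3*k*m*s + a^3*k^2*m^2 + 4*g*a*k*s*t - 2*g*a*k^2*m*t - 4*g*a^3*k*s + 2*g*a^3*k^2*m - 1*g^2*a*k^2*t + g^2*a^3*k^2) * hprod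
  · linear_combination (-1*a*s*f^2*t + 3*a*s^2*f*t - 1*a*k*m*s*f*t + a^3*f^2*t - 2*a^3*s*f*t + a^3*s*f^2 + a^3*s^2*t - 3*a^3*s^2*f + a^3*k*m*s*f - 1*a^5*f^2 + 2*a^5*s*f - 1*a^5*s^2 - 1*g*a*k*s*f*t + g*a^3*k*f*t - 3*g*a^3*k*s*t + g*a^3*k*s*f + g*a^3*k^2*m*t - 1*g*a^5*k*f + 3*g*a^5*k*s - 1*g*a^5*k^2*m + g^2*a^3*k^2*t - 1*g^2*a^5*k^2) * hsum + (-4*a*s^2*t + 4*a*k*m*s*t - 1*a*k^2*m^2*t + 4*a^3*s^2 - 4*a^3*k*m*s + a^3*k^2*m^2 + 4*g*a*k*s*t - 2*g*a*k^2*m*t - 4*g*a^3*k*s + 2*g*a^3*k^2*m - 1*g^2*a*k^2*t + g^2*a^3*k^2) * hprod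
  · linear_combination (k*s*f^2*t - 3*k*s^2*f*t + k^2*m*s*f*t - 1*a^2*k*f^2*t + 2*a^2*k*s*f*t - 1*a^2*k*s*f^2 - 1*a^2*k*s^2*t + 3*a^2*k*s^2*f - 1*a^2*k^2*m*s*f + a^4*k*f^2 - 2*a^4*k*s*f + a^4*k*s^2 + g*k^2*s*f*t - 1*g*a^2*k^2*f*t + 3*g*a^2*k^2*s*t - 1*g*a^2*k^2*s*f - 1*g*a^2*k^3*m*t + g*a^4*k^2*f - 3*g*a^4*k^2*s + g*a^4*k^3*m - 1*g^2*a^2*k^3*t + g^2*a^4*k^3) * hsum + (4*k*s^2*t - 4*k^2*m*s*t + k^3*m^2*t - 4*a^2*k*s^2 + 4*a^2*k^2*m*s - 1*a^2*k^3*m^2 - 4*g*k^2*s*t + 2*g*k^3*m*t + 4*g*a^2*k^2*s - 2*g*a^2*k^3*m + g^2*k^3*t - 1*g^2*a^2*k^3) * hprod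

set_option maxHeartbeats 1000000

/-- If `H·ξ ≠ 0` and `ξ×H ≠ 0`, then `π₁, π₂, π₃` are symmetric, mutually
orthogonal projections summing to `Id₃`, and
`p₂(τ,ξ) = (ρτ² − (H·ξ)²)·π₁ + ρ(τ² − c_s²(ξ))·π₂ + ρ(τ² − c_f²(ξ))·π₃`. -/
theorem stmt6 (ρ γ p : ℝ) (H ξ : Fin 3 → ℝ)
    (hρ : 0 < ρ) (hγp : 0 < γ * p)
    (hHξ : dot3 H ξ ≠ 0) (hcross : cross3 ξ H ≠ 0) :
    (pi1 H ξ)ᵀ = pi1 H ξ ∧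
    (pi2 ρ γ p H ξ)ᵀ = pi2 ρ γ p H ξ ∧
    (pi3 ρ γ p H ξ)ᵀ = pi3 ρ γ p H ξ ∧
    pi1 H ξ * pi2 ρ γ p H ξ = 0 ∧ pi2 ρ γ p H ξ * pi1 H ξ = 0 ∧
    pi1 H ξ * pi3 ρ γ p H ξ = 0 ∧ pi3 ρ γ p H ξ * pi1 H ξ = 0 ∧
    pi2 ρ γ p H ξ * pi3 ρ γ p H ξ = 0 ∧ pi3 ρ γ p H ξ * pi2 ρ γ p H ξ = 0 ∧
    pi1 H ξ * pi1 H ξ = pi1 H ξ ∧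
    pi2 ρ γ p H ξ * pi2 ρ γ p H ξ = pi2 ρ γ p H ξ ∧
    pi3 ρ γ p H ξ * pi3 ρ γ p H ξ = pi3 ρ γ p H ξ ∧
    pi1 H ξ + pi2 ρ γ p H ξ + pi3 ρ γ p H ξ = 1 ∧
    ∀ τ : ℝ,
      p2 ρ γ p τ H ξ
        = (ρ * τ ^ 2 - (dot3 H ξ) ^ 2) • pi1 H ξ
          + (ρ * (τ ^ 2 - cs2 ρ γ p H ξ)) • pi2 ρ γ p H ξ
          + (ρ * (τ ^ 2 - cf2 ρ γ p H ξ)) • pi3 ρ γ p H ξ := by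
  have hρ' : ρ ≠ 0 := ne_of_gt hρ
  simp only [pi1, pi2, pi3, w2, p2]
  have hρ' : ρ ≠ 0 := ne_of_gt hρ
  set a := dot3 H ξ with ha
  set k := dot3 ξ ξ with hk
  set m := dot3 H H with hm
  set s := ρ * cs2 ρ γ p H ξ with hs
  set f := ρ * cf2 ρ γ p H ξ with hf
  have hc : 0 < dot3 (cross3 ξ H) (cross3 ξ H) := dot3_pos _ hcross
  have hlag : dot3 (cross3 ξ H) (cross3 ξ H) = k * m - a ^ 2 := lagrange H ξ
  have hmka : 0 < k * m - a ^ 2 := hlag ▸ hc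
  have ha2 : 0 < a ^ 2 := by have := mul_self_pos.mpr hHξ; nlinarith
  have hknn : 0 ≤ k := by
    rw [hk]; simp only [dot3]
    nlinarith [mul_self_nonneg (ξ 0), mul_self_nonneg (ξ 1), mul_self_nonneg (ξ 2)]
  have hmnn : 0 ≤ m := by
    rw [hm]; simp only [dot3]
    nlinarith [mul_self_nonneg (H 0), mul_self_nonneg (H 1), mul_self_nonneg (H 2)]
  have hk0 : 0 < k := by nlinarith
  have hm0 : 0 < m := by nlinarith
  have hsum : s + f = (γ * p + m) * k := by
    rw [hs, hf]
    simp only [cs2, cf2, csq, hsq, ← hk, ← hm]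
    field_simp
    ring
  have hArg : 0 ≤ (csq ρ γ p - hsq ρ H) ^ 2 * (dot3 ξ ξ) ^ 2
      + 4 * bsq ρ H ξ * csq ρ γ p * dot3 ξ ξ := by
    have h1 : 0 ≤ bsq ρ H ξ := div_nonneg hc.le hρ.le
    have h2 : 0 ≤ csq ρ γ p := by unfold csq; positivity
    have h3 : 0 ≤ dot3 ξ ξ := by rw [← hk]; exact hk0.le
    positivity
  have hS := Real.sq_sqrt hArg
  have hprod : s * f = γ * p * k * a ^ 2 := by
    rw [hs, hf]
    simp only [cs2, cf2]
    rw [show ∀ x y : ℝ, ρ * ((x - y)/2) * (ρ * ((x + y)/2)) = ρ^2 * (x^2 - y^2)/4 from by intros; ring]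
    rw [hS]
    simp only [csq, hsq, bsq, hlag, ← hk, ← hm]
    field_simp
    ring
  clear_value a k m s f
  have hq : (s - a ^ 2) * (f - a ^ 2) = a ^ 2 * (a ^ 2 - k * m) := by
    linear_combination hprod - a ^ 2 * hsum
  have hqneg : (s - a ^ 2) * (f - a ^ 2) < 0 := by rw [hq]; nlinarith
  have hsa : s - a ^ 2 ≠ 0 := by intro h; rw [h, zero_mul] at hqneg; exact lt_irrefl 0 hqneg
  have hfa : f - a ^ 2 ≠ 0 := by intro h; rw [h, mul_zero] at hqneg; exact lt_irrefl 0 hqneg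
  have hsf : s - f ≠ 0 := by
    intro h
    have hse : s = f := by linarith [sub_eq_zero.mp h]
    rw [← hse] at hq
    nlinarith [mul_self_nonneg (s - a ^ 2), ha2, hmka]
  have hfs : f - s ≠ 0 := by intro h; apply hsf; linarith [sub_eq_zero.mp h]
  have hamk : a ^ 2 - m * k ≠ 0 := by
    have h1 : a ^ 2 - m * k < 0 := by rw [mul_comm]; linarith
    exact ne_of_lt h1
  have hk' : dot3 ξ ξ = k := hk.symm
  have hm' : dot3 H H = m := hm.symm
  have ha' : dot3 H ξ = a := ha.symm
  have ha'' : dot3 ξ H = a := by rw [dot3_comm]; exact ha.symm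
  have hsum' : f + s = (γ * p + m) * k := by linarith
  have hprod' : f * s = γ * p * k * a ^ 2 := by rw [mul_comm]; exact hprod
  refine ⟨?_, ?_, ?_, ?_, ?_, ?_, ?_, ?_, ?_, ?_, ?_, ?_, ?_, ?_⟩
  · exact trans1 a k m H ξ
  · exact trans2 (γ * p) a k m s f H ξ
  · exact trans2 (γ * p) a k m f s H ξ
  · exact mul12 (γ * p) a k m s f H ξ hsf hsa hamk hk' hm' ha' ha''
  · exact mul21 (γ * p) a k m s f H ξ hsf hsa hamk hk' hm' ha' ha''
  · exact mul12 (γ * p) a k m f s H ξ hfs hfa hamk hk' hm' ha' ha''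
  · exact mul21 (γ * p) a k m f s H ξ hfs hfa hamk hk' hm' ha' ha''
  · exact mul23 (γ * p) a k m s f H ξ hsum hprod hsf hfs hsa hfa hk' hm' ha' ha''
  · exact mul23 (γ * p) a k m f s H ξ hsum' hprod' hfs hsf hfa hsa hk' hm' ha' ha''
  · exact idem1 a k m H ξ hamk hk' hm' ha' ha''
  · exact idem2 (γ * p) a k m s f H ξ hsum hprod hsf hsa hk' hm' ha' ha''
  · exact idem2 (γ * p) a k m f s H ξ hsum' hprod' hfs hfa hk' hm' ha' ha''
  · exact sum1 (γ * p) a k m s f H ξ hsum hprod hsf hfs hsa hfa hamk hk' hm' ha' ha''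
  · intro τ
    rw [show ρ * (τ ^ 2 - cs2 ρ γ p H ξ) = ρ * τ ^ 2 - s from by rw [hs]; ring,
        show ρ * (τ ^ 2 - cf2 ρ γ p H ξ) = ρ * τ ^ 2 - f from by rw [hf]; ring]
    exact decom (γ * p) a k m s f (ρ * τ ^ 2) H ξ hsum hprod hsf hfs hsa hfa hamk hk' hm' ha' ha''
end
end

section
/- Let π₁, π₃ : ℝⁿ × ℝⁿ → Mat₃(ℝ) be continuously differentiable matrix-valued maps, written (x,ξ) ↦ πⱼ(x,ξ), such that at every point: π₁ and π₃ are symmetric, π₁² = π₁, π₃² = π₃, π₁π₃ = π₃π₁ = 0, and tr π₁ = 1. Then {π₁, π₃}·π₁ = 0 at every point, where {f,g} = Σⱼ₌₁ⁿ (∂_{ξⱼ}f)(∂_{xⱼ}g) − (∂_{xⱼ}f)(∂_{ξⱼ}g) denotes the Poisson bracket of matrix-valued functions (products being matrix products). -/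
open Matrix

noncomputable section

/-- Entrywise partial derivative `∂_{xⱼ} f` of a matrix-valued map on
`ℝⁿ × ℝⁿ ∋ (x,ξ)`. -/
def pdX (n : ℕ) (j : Fin n)
    (f : (Fin n → ℝ) × (Fin n → ℝ) → Matrix (Fin 3) (Fin 3) ℝ)
    (z : (Fin n → ℝ) × (Fin n → ℝ)) : Matrix (Fin 3) (Fin 3) ℝ :=
  Matrix.of fun a b => fderiv ℝ (fun w => f w a b) z ((Pi.single j 1 : Fin n → ℝ), 0)

/-- Entrywise partial derivative `∂_{ξⱼ} f` of a matrix-valued map on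
`ℝⁿ × ℝⁿ ∋ (x,ξ)`. -/
def pdXi (n : ℕ) (j : Fin n)
    (f : (Fin n → ℝ) × (Fin n → ℝ) → Matrix (Fin 3) (Fin 3) ℝ)
    (z : (Fin n → ℝ) × (Fin n → ℝ)) : Matrix (Fin 3) (Fin 3) ℝ :=
  Matrix.of fun a b => fderiv ℝ (fun w => f w a b) z (0, (Pi.single j 1 : Fin n → ℝ))

/-- Poisson bracket `{f,g} = Σⱼ (∂_{ξⱼ}f)(∂_{xⱼ}g) − (∂_{xⱼ}f)(∂_{ξⱼ}g)` of
matrix-valued maps, products being matrix products. -/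
def poisson (n : ℕ)
    (f g : (Fin n → ℝ) × (Fin n → ℝ) → Matrix (Fin 3) (Fin 3) ℝ)
    (z : (Fin n → ℝ) × (Fin n → ℝ)) : Matrix (Fin 3) (Fin 3) ℝ :=
  ∑ j : Fin n, (pdXi n j f z * pdX n j g z - pdX n j f z * pdXi n j g z)


def dirD (n : ℕ) (v : (Fin n → ℝ) × (Fin n → ℝ))
    (f : (Fin n → ℝ) × (Fin n → ℝ) → Matrix (Fin 3) (Fin 3) ℝ)
    (z : (Fin n → ℝ) × (Fin n → ℝ)) : Matrix (Fin 3) (Fin 3) ℝ :=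
  Matrix.of fun a b => fderiv ℝ (fun w => f w a b) z v

lemma dirD_const (n : ℕ) (v : (Fin n → ℝ) × (Fin n → ℝ))
    (c : Matrix (Fin 3) (Fin 3) ℝ) (z : (Fin n → ℝ) × (Fin n → ℝ)) :
    dirD n v (fun _ => c) z = 0 := by
  ext a b
  simp [dirD]

lemma dirD_mul (n : ℕ) (v : (Fin n → ℝ) × (Fin n → ℝ))
    (f g : (Fin n → ℝ) × (Fin n → ℝ) → Matrix (Fin 3) (Fin 3) ℝ)
    (z : (Fin n → ℝ) × (Fin n → ℝ))
    (hf : ∀ a b, DifferentiableAt ℝ (fun w => f w a b) z)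
    (hg : ∀ a b, DifferentiableAt ℝ (fun w => g w a b) z) :
    dirD n v (fun w => f w * g w) z = dirD n v f z * g z + f z * dirD n v g z := by
  ext a b
  have h1 : ∀ k : Fin 3, DifferentiableAt ℝ (fun w => f w a k * g w k b) z :=
    fun k => (hf a k).mul (hg k b)
  have e2 : fderiv ℝ (fun w => ∑ k : Fin 3, f w a k * g w k b) z
      = ∑ k : Fin 3, fderiv ℝ (fun w => f w a k * g w k b) z :=
    fderiv_fun_sum (fun k _ => h1 k)
  simp only [dirD, Matrix.of_apply, Matrix.add_apply, Matrix.mul_apply]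
  rw [e2, ContinuousLinearMap.sum_apply]
  have e3 : ∀ k : Fin 3, fderiv ℝ (fun w => f w a k * g w k b) z v
      = f z a k * fderiv ℝ (fun w => g w k b) z v
        + g z k b * fderiv ℝ (fun w => f w a k) z v := by
    intro k
    rw [fderiv_fun_mul (hf a k) (hg k b)]
    simp
  rw [Finset.sum_congr rfl (fun k _ => e3 k), Finset.sum_add_distrib, add_comm]
  congr 1 <;> exact Finset.sum_congr rfl fun k _ => by ring

lemma dirD_symm (n : ℕ) (v : (Fin n → ℝ) × (Fin n → ℝ))
    (f : (Fin n → ℝ) × (Fin n → ℝ) → Matrix (Fin 3) (Fin 3) ℝ)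
    (z : (Fin n → ℝ) × (Fin n → ℝ))
    (hs : ∀ w, (f w)ᵀ = f w) :
    (dirD n v f z)ᵀ = dirD n v f z := by
  ext a b
  simp only [Matrix.transpose_apply, dirD, Matrix.of_apply]
  have hfun : (fun w => f w b a) = fun w => f w a b := by
    funext w
    have := congrFun (congrFun (hs w) a) b
    simpa [Matrix.transpose_apply] using this
  rw [hfun]

lemma minor_key (P : Matrix (Fin 3) (Fin 3) ℝ) (h : P * P = P) (ht : P.trace = 1) :
    ∀ a i j b, P a i * P j b = P a b * P j i := by
  have e : ∀ a b : Fin 3, P a 0 * P 0 b + P a 1 * P 1 b + P a 2 * P 2 b = P a b := by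
    intro a b
    have := congrFun (congrFun h a) b
    simpa [Matrix.mul_apply, Fin.sum_univ_three] using this
  have tr : P 0 0 + P 1 1 + P 2 2 = 1 := by
    simpa [Matrix.trace, Matrix.diag, Fin.sum_univ_three] using ht
  have e00 := e 0 0; have e01 := e 0 1; have e02 := e 0 2
  have e10 := e 1 0; have e11 := e 1 1; have e12 := e 1 2
  have e20 := e 2 0; have e21 := e 2 1; have e22 := e 2 2
  have m00 : P 1 1 * P 2 2 - P 1 2 * P 2 1 = 0 := by
    linear_combination (1/2) * e00 - (1/2) * e11 - (1/2) * e22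
      + ((P 0 0 + P 1 1 + P 2 2)/2 - P 0 0) * tr
  have m11 : P 0 0 * P 2 2 - P 0 2 * P 2 0 = 0 := by
    linear_combination (-1/2) * e00 + (1/2) * e11 - (1/2) * e22
      + ((P 0 0 + P 1 1 + P 2 2)/2 - P 1 1) * tr
  have m22 : P 0 0 * P 1 1 - P 0 1 * P 1 0 = 0 := by
    linear_combination (-1/2) * e00 - (1/2) * e11 + (1/2) * e22
      + ((P 0 0 + P 1 1 + P 2 2)/2 - P 2 2) * tr
  have m01 : P 1 0 * P 2 2 - P 1 2 * P 2 0 = 0 := by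
    linear_combination -e10 + P 1 0 * tr
  have m02 : P 1 0 * P 2 1 - P 1 1 * P 2 0 = 0 := by
    linear_combination e20 - P 2 0 * tr
  have m10 : P 0 1 * P 2 2 - P 0 2 * P 2 1 = 0 := by
    linear_combination -e01 + P 0 1 * tr
  have m12 : P 0 0 * P 2 1 - P 0 1 * P 2 0 = 0 := by
    linear_combination -e21 + P 2 1 * tr
  have m20 : P 0 1 * P 1 2 - P 0 2 * P 1 1 = 0 := by
    linear_combination e02 - P 0 2 * tr
  have m21 : P 0 0 * P 1 2 - P 0 2 * P 1 0 = 0 := by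
    linear_combination -e12 + P 1 2 * tr
  intro a i j b
  fin_cases a <;> fin_cases i <;> fin_cases j <;> fin_cases b <;>
    simp only [Fin.mk_zero, Fin.mk_one, Fin.reduceFinMk] <;>
    first
      | ring1
      | linear_combination m00 | linear_combination -m00
      | linear_combination m01 | linear_combination -m01
      | linear_combination m02 | linear_combination -m02
      | linear_combination m10 | linear_combination -m10
      | linear_combination m11 | linear_combination -m11
      | linear_combination m12 | linear_combination -m12
      | linear_combination m20 | linear_combination -m20
      | linear_combination m21 | linear_combination -m21
      | linear_combination m22 | linear_combination -m22

lemma rank1_sandwich (P X : Matrix (Fin 3) (Fin 3) ℝ) (h : P * P = P)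
    (ht : P.trace = 1) : P * X * P = (X * P).trace • P := by
  have key := minor_key P h ht
  ext a b
  simp only [Matrix.mul_apply, Matrix.smul_apply, Matrix.trace, Matrix.diag,
    smul_eq_mul, Finset.sum_mul, Finset.mul_sum]
  rw [Finset.sum_comm]
  refine Finset.sum_congr rfl fun i _ => Finset.sum_congr rfl fun j _ => ?_
  have := key a i j b
  linear_combination X i j * this

/-- If `π₁, π₃` are continuously differentiable, pointwise symmetric,
idempotent, mutually annihilating, and `tr π₁ = 1`, then `{π₁,π₃}·π₁ = 0`
everywhere. -/
theorem stmt8 (n : ℕ)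
    (π₁ π₃ : (Fin n → ℝ) × (Fin n → ℝ) → Matrix (Fin 3) (Fin 3) ℝ)
    (hd1 : ∀ a b, ContDiff ℝ 1 fun z => π₁ z a b)
    (hd3 : ∀ a b, ContDiff ℝ 1 fun z => π₃ z a b)
    (hsym1 : ∀ z, (π₁ z)ᵀ = π₁ z) (hsym3 : ∀ z, (π₃ z)ᵀ = π₃ z)
    (hidem1 : ∀ z, π₁ z * π₁ z = π₁ z) (hidem3 : ∀ z, π₃ z * π₃ z = π₃ z)
    (h13 : ∀ z, π₁ z * π₃ z = 0) (h31 : ∀ z, π₃ z * π₁ z = 0)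
    (htr : ∀ z, (π₁ z).trace = 1) :
    ∀ z, poisson n π₁ π₃ z * π₁ z = 0 := by
  intro z
  have hdf1 : ∀ a b, DifferentiableAt ℝ (fun w => π₁ w a b) z :=
    fun a b => ((hd1 a b).differentiable one_ne_zero).differentiableAt
  have hdf3 : ∀ a b, DifferentiableAt ℝ (fun w => π₃ w a b) z :=
    fun a b => ((hd3 a b).differentiable one_ne_zero).differentiableAt
  -- derivative of π₁ * π₃ = 0
  have R13 : ∀ v, dirD n v π₁ z * π₃ z + π₁ z * dirD n v π₃ z = 0 := by
    intro v
    have key := dirD_mul n v π₁ π₃ z hdf1 hdf3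
    have hfg : (fun w => π₁ w * π₃ w) = fun _ => (0 : Matrix (Fin 3) (Fin 3) ℝ) :=
      funext h13
    rw [hfg, dirD_const] at key
    exact key.symm
  have R31 : ∀ v, dirD n v π₃ z * π₁ z + π₃ z * dirD n v π₁ z = 0 := by
    intro v
    have key := dirD_mul n v π₃ π₁ z hdf3 hdf1
    have hfg : (fun w => π₃ w * π₁ w) = fun _ => (0 : Matrix (Fin 3) (Fin 3) ℝ) :=
      funext h31
    rw [hfg, dirD_const] at key
    exact key.symm
  have Rsym1 : ∀ v, (dirD n v π₁ z)ᵀ = dirD n v π₁ z :=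
    fun v => dirD_symm n v π₁ z hsym1
  have Rsym3 : ∀ v, (dirD n v π₃ z)ᵀ = dirD n v π₃ z :=
    fun v => dirD_symm n v π₃ z hsym3
  set P := π₁ z with hPdef
  set Q := π₃ z with hQdef
  -- abbreviations for the directional derivatives
  set A : Fin n → Matrix (Fin 3) (Fin 3) ℝ :=
    fun j => dirD n ((0 : Fin n → ℝ), Pi.single j 1) π₁ z with hA
  set B : Fin n → Matrix (Fin 3) (Fin 3) ℝ :=
    fun j => dirD n ((Pi.single j 1 : Fin n → ℝ), 0) π₁ z with hB
  set C : Fin n → Matrix (Fin 3) (Fin 3) ℝ :=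
    fun j => dirD n ((Pi.single j 1 : Fin n → ℝ), 0) π₃ z with hC
  set E : Fin n → Matrix (Fin 3) (Fin 3) ℝ :=
    fun j => dirD n ((0 : Fin n → ℝ), Pi.single j 1) π₃ z with hE
  have hM : poisson n π₁ π₃ z = ∑ j : Fin n, (A j * C j - B j * E j) := rfl
  set N : Matrix (Fin 3) (Fin 3) ℝ := ∑ j : Fin n, (E j * B j - C j * A j) with hN
  set M : Matrix (Fin 3) (Fin 3) ℝ := poisson n π₁ π₃ z with hMdef
  -- step 1 : M * P = P * N
  have hMP : M * P = P * N := by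
    rw [hM, hN, Finset.sum_mul, Finset.mul_sum]
    refine Finset.sum_congr rfl fun j _ => ?_
    have h1 : C j * P = -(Q * B j) :=
      eq_neg_of_add_eq_zero_left (R31 ((Pi.single j 1 : Fin n → ℝ), 0))
    have h2 : A j * Q = -(P * E j) :=
      eq_neg_of_add_eq_zero_left (R13 ((0 : Fin n → ℝ), Pi.single j 1))
    have h3 : E j * P = -(Q * A j) :=
      eq_neg_of_add_eq_zero_left (R31 ((0 : Fin n → ℝ), Pi.single j 1))
    have h4 : B j * Q = -(P * C j) :=
      eq_neg_of_add_eq_zero_left (R13 ((Pi.single j 1 : Fin n → ℝ), 0))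
    calc (A j * C j - B j * E j) * P
        = A j * (C j * P) - B j * (E j * P) := by noncomm_ring
      _ = -(A j * Q * B j) + B j * Q * A j := by rw [h1, h3]; noncomm_ring
      _ = P * E j * B j - P * C j * A j := by rw [h2, h4]; noncomm_ring
      _ = P * (E j * B j - C j * A j) := by noncomm_ring
  -- step 2 : Nᵀ = -M
  have hNT : Nᵀ = -M := by
    rw [hN, hM]
    rw [Matrix.transpose_sum, ← Finset.sum_neg_distrib]
    refine Finset.sum_congr rfl fun j _ => ?_
    rw [Matrix.transpose_sub, Matrix.transpose_mul, Matrix.transpose_mul,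
      Rsym1 _, Rsym1 _, Rsym3 _, Rsym3 _]
    noncomm_ring
  -- step 3 : trace (M * P) = 0
  have htr0 : (M * P).trace = 0 := by
    have h5 : (M * P).trace = (P * N).trace := by rw [hMP]
    have h6 : (P * N).trace = ((P * N)ᵀ).trace := (Matrix.trace_transpose _).symm
    have h7 : ((P * N)ᵀ).trace = (-(M * P)).trace := by
      rw [Matrix.transpose_mul, hNT, hsym1 z]
      congr 1
      noncomm_ring
    have h8 : (-(M * P)).trace = -((M * P).trace) := by simp
    have := h5.trans (h6.trans (h7.trans h8))
    linarith
  -- step 4 : absorption M*P = P*(M*P)*P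
  have hPP : P * P = P := hidem1 z
  have habs : M * P = P * (M * P) * P := by
    have l1 : P * (M * P) = M * P := by
      rw [hMP, ← Matrix.mul_assoc, hPP]
    have l2 : (M * P) * P = M * P := by
      rw [Matrix.mul_assoc, hPP]
    rw [l1, l2]
  -- conclude via the rank-one sandwich lemma
  have hs := rank1_sandwich P (M * P) hPP (htr z)
  have htr2 : ((M * P) * P).trace = 0 := by
    rw [Matrix.mul_assoc, hPP]; exact htr0
  rw [htr2, zero_smul] at hs
  calc M * P = P * (M * P) * P := habs
    _ = 0 := hs
end
end

section
/- For every ξ ∈ ℝ³, the adjugate (transpose of the cofactor matrix) of the 8×8 matrix A(ξ) is the zero matrix; equivalently, rank A(ξ) ≤ 6 for every ξ. (Consequently the adjugate of q(τ,ξ) = τ·Id₈ + A(ξ) is divisible by τ: ᵗq^co = τ·M for a matrix M depending polynomially on τ and ξ.) -/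
/-!
Every nonzero entry of `A(ξ)` lies in one of the three rows or three columns belonging to `u̇`,
so `A(ξ)` is the sum of a matrix with three nonzero rows and one with three nonzero columns,
and `rank A(ξ) ≤ 6`. A square matrix of corank at least two has all its maximal proper minors
equal to zero, so `adj A(ξ) = 0`. Then the polynomial matrix `adj (X • 1 + A(ξ))` vanishes at
`X = 0`, hence is `X` times a polynomial matrix.
-/

open Matrix

noncomputable section

/-- The matrix `A(ξ) = q(0,ξ)` of the principal symbol of the linearized ideal
MHD system in the coordinates `(ρ̇,u̇₁,u̇₂,u̇₃,Ḣ₁,Ḣ₂,Ḣ₃,ṗ)`, so that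
`q(τ,ξ) = τ·Id₈ + A(ξ)`. -/
def Amat (ρ γ p : ℝ) (H ξ : Fin 3 → ℝ) : Matrix (Fin 8) (Fin 8) ℝ :=
  !![0, ρ * ξ 0, ρ * ξ 1, ρ * ξ 2, 0, 0, 0, 0;
     0, 0, 0, 0, (ξ 0 * H 0 - dot3 H ξ) / ρ, (ξ 0 * H 1) / ρ, (ξ 0 * H 2) / ρ, ξ 0 / ρ;
     0, 0, 0, 0, (ξ 1 * H 0) / ρ, (ξ 1 * H 1 - dot3 H ξ) / ρ, (ξ 1 * H 2) / ρ, ξ 1 / ρ;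
     0, 0, 0, 0, (ξ 2 * H 0) / ρ, (ξ 2 * H 1) / ρ, (ξ 2 * H 2 - dot3 H ξ) / ρ, ξ 2 / ρ;
     0, H 0 * ξ 0 - dot3 H ξ, H 0 * ξ 1, H 0 * ξ 2, 0, 0, 0, 0;
     0, H 1 * ξ 0, H 1 * ξ 1 - dot3 H ξ, H 1 * ξ 2, 0, 0, 0, 0;
     0, H 2 * ξ 0, H 2 * ξ 1, H 2 * ξ 2 - dot3 H ξ, 0, 0, 0, 0;
     0, γ * p * ξ 0, γ * p * ξ 1, γ * p * ξ 2, 0, 0, 0, 0]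

namespace Matrix

variable {m n K : Type*} [Fintype n] [Field K]

theorem rank_add_le (A B : Matrix m n K) : (A + B).rank ≤ A.rank + B.rank := by
  rw [rank, rank, rank, mulVecLin_add]
  exact (Submodule.finrank_mono (LinearMap.range_add_le _ _)).trans
    (Submodule.finrank_add_le_finrank_add_finrank _ _)

theorem rank_updateRow_le [DecidableEq m] (A : Matrix m n K) (j : m) (r : n → K) :
    (A.updateRow j r).rank ≤ A.rank + 1 := by
  have hsplit : A.updateRow j r = A + vecMulVec (Pi.single j 1) (r - A j) := by
    ext i k
    by_cases hi : i = j
    · subst hi; simp [vecMulVec_apply]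
    · simp [vecMulVec_apply, hi]
  rw [hsplit]
  exact (rank_add_le _ _).trans (Nat.add_le_add_left (rank_vecMulVec_le _ _) _)

theorem adjugate_eq_zero_of_rank_add_two_le [DecidableEq n] (A : Matrix n n K)
    (h : A.rank + 2 ≤ Fintype.card n) : A.adjugate = 0 := by
  ext i j
  rw [adjugate_apply, zero_apply]
  by_contra hdet
  have hfull := rank_of_det_ne_zero hdet
  have hle := A.rank_updateRow_le j (Pi.single i 1)
  omega

theorem rank_le_card_add_card_of_eq_zero [Fintype m] (A : Matrix m n K) (s : Finset m)
    (t : Finset n) (h : ∀ i ∉ s, ∀ j ∉ t, A i j = 0) : A.rank ≤ s.card + t.card := by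
  classical
  let B : Matrix m n K := of fun i j => if i ∈ s then A i j else 0
  let C : Matrix m n K := of fun i j => if i ∈ s then 0 else A i j
  have hB : B.rank ≤ s.card := by
    refine B.rank_le_card_of_support_subset s fun i hi => ?_
    by_contra his
    exact hi (funext fun j => if_neg his)
  have hC : C.rank ≤ t.card := by
    rw [← rank_transpose]
    refine Cᵀ.rank_le_card_of_support_subset t fun j hj => ?_
    by_contra hjt
    refine hj (funext fun i => ?_)
    by_cases his : i ∈ s
    · exact if_pos his
    · exact (if_neg his).trans (h i his j hjt)
  have hA : A = B + C := by
    ext i j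
    by_cases his : i ∈ s <;> simp [B, C, his]
  rw [hA]
  exact (rank_add_le B C).trans (add_le_add hB hC)

open Polynomial in
theorem adjugate_smul_one_add_eq_smul_of_adjugate_eq_zero {R : Type*} [CommRing R]
    [DecidableEq n] (A : Matrix n n R) (hA : A.adjugate = 0) (τ : R) :
    (τ • (1 : Matrix n n R) + A).adjugate =
      τ • ((X : R[X]) • (1 : Matrix n n R[X]) + A.map C).adjugate.map
        (fun q => q.divX.eval τ) := by
  set Q := (X : R[X]) • (1 : Matrix n n R[X]) + A.map C
  have hev : ∀ x : R, (evalRingHom x).mapMatrix Q = x • (1 : Matrix n n R) + A := by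
    intro x; ext i k; by_cases hik : i = k <;> simp [Q, hik]
  have hcoeff : ∀ i k, (Q.adjugate i k).coeff 0 = 0 := by
    intro i k
    simpa [hev, hA, coeff_zero_eq_eval_zero] using
      congrFun₂ (RingHom.map_adjugate (evalRingHom 0) Q) i k
  ext i k
  rw [← hev τ, ← RingHom.map_adjugate]
  simpa [hcoeff] using (congrArg (eval τ) (X_mul_divX_add (Q.adjugate i k))).symm

end Matrix

theorem Amat_apply_eq_zero (ρ γ p : ℝ) (H ξ : Fin 3 → ℝ) {i j : Fin 8}
    (hi : i ∉ ({1, 2, 3} : Finset (Fin 8))) (hj : j ∉ ({1, 2, 3} : Finset (Fin 8))) :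
    Amat ρ γ p H ξ i j = 0 := by
  fin_cases i <;> fin_cases j <;> simp_all [Amat]

theorem rank_Amat_le (ρ γ p : ℝ) (H ξ : Fin 3 → ℝ) : (Amat ρ γ p H ξ).rank ≤ 6 :=
  (Amat ρ γ p H ξ).rank_le_card_add_card_of_eq_zero {1, 2, 3} {1, 2, 3}
    fun _ hi _ hj => Amat_apply_eq_zero ρ γ p H ξ hi hj

/-- The adjugate of `A(ξ)` vanishes; equivalently `rank A(ξ) ≤ 6`.
Consequently the adjugate of `q(τ,ξ) = τ·Id₈ + A(ξ)` is divisible by `τ`. -/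
theorem stmt10 (ρ γ p : ℝ) (H : Fin 3 → ℝ) :
    ∀ ξ : Fin 3 → ℝ,
      (Amat ρ γ p H ξ).adjugate = 0 ∧
      (Amat ρ γ p H ξ).rank ≤ 6 ∧
      ∀ τ : ℝ, ∃ M : Matrix (Fin 8) (Fin 8) ℝ,
        (τ • (1 : Matrix (Fin 8) (Fin 8) ℝ) + Amat ρ γ p H ξ).adjugate = τ • M := by
  intro ξ
  have hrank := rank_Amat_le ρ γ p H ξ
  have hadj : (Amat ρ γ p H ξ).adjugate = 0 :=
    adjugate_eq_zero_of_rank_add_two_le _ (by simpa using Nat.add_le_add_right hrank 2)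
  exact ⟨hadj, hrank,
    fun τ => ⟨_, adjugate_smul_one_add_eq_smul_of_adjugate_eq_zero _ hadj τ⟩⟩
end
end

section
/- Assume in addition that ξ ≠ 0 and H·ξ = 0. Then the kernel of A(ξ) has dimension exactly 6; explicitly, ker A(ξ) = { (ρ̇, u̇, Ḣ, ṗ) ∈ ℝ×ℝ³×ℝ³×ℝ : ξ·u̇ = 0 and ṗ = −H·Ḣ }. (This is the statement that the fiber of the kernel of the principal symbol at the intersection manifold Σ₂ = {τ = 0, ξ·H = 0} has dimension 6 = r₀ + 1 with r₀ = 5.) -/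
open Matrix

noncomputable section

/-! When `H·ξ = 0` every row of `A(ξ)` is a multiple of one of the two constraints `ξ·u̇` and
`H·Ḣ + ṗ`, so `A(ξ) = C B` with `B : ℝ⁸ → ℝ²` the constraint map and `C : ℝ² → ℝ⁸`.
Since `ρ ≠ 0` and `ξ ≠ 0`, `C` is injective, hence `ker A(ξ) = ker B`; and `B` is onto
(again because `ξ ≠ 0`), so its kernel has dimension `8 - 2 = 6`. -/

theorem Matrix.ker_mulVecLin_mul_of_ker_eq_bot {K l m n : Type*} [CommRing K] [Fintype m]
    [Fintype n] {C : Matrix l m K} (hC : LinearMap.ker C.mulVecLin = ⊥) (B : Matrix m n K) :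
    LinearMap.ker (C * B).mulVecLin = LinearMap.ker B.mulVecLin := by
  rw [Matrix.mulVecLin_mul, LinearMap.ker_comp_of_ker_eq_bot _ hC]

theorem Matrix.finrank_ker_mulVecLin_add_card_of_surjective {K m n : Type*} [Field K] [Fintype m]
    [Fintype n] {B : Matrix m n K} (hB : Function.Surjective B.mulVecLin) :
    Module.finrank K (LinearMap.ker B.mulVecLin) + Fintype.card m = Fintype.card n := by
  have h := LinearMap.finrank_range_add_finrank_ker B.mulVecLin
  rw [LinearMap.range_eq_top.mpr hB, finrank_top, Module.finrank_fintype_fun_eq_card,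
    Module.finrank_fintype_fun_eq_card] at h
  omega

theorem dot3_self_ne_zero {ξ : Fin 3 → ℝ} (hξ : ξ ≠ 0) : dot3 ξ ξ ≠ 0 := by
  have h : dot3 ξ ξ = ξ ⬝ᵥ ξ := by simp [dot3, dotProduct, Fin.sum_univ_three]
  rwa [h, Ne, dotProduct_self_eq_zero]

def constraintMat (H ξ : Fin 3 → ℝ) : Matrix (Fin 2) (Fin 8) ℝ :=
  !![0, ξ 0, ξ 1, ξ 2, 0, 0, 0, 0;
     0, 0, 0, 0, H 0, H 1, H 2, 1]

def coeffMat (ρ γ p : ℝ) (H ξ : Fin 3 → ℝ) : Matrix (Fin 8) (Fin 2) ℝ :=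
  !![ρ, 0; 0, ξ 0 / ρ; 0, ξ 1 / ρ; 0, ξ 2 / ρ; H 0, 0; H 1, 0; H 2, 0; γ * p, 0]

section

variable {ρ γ p : ℝ} {H ξ : Fin 3 → ℝ}

theorem Amat_eq_coeffMat_mul_constraintMat (hHξ : dot3 H ξ = 0) :
    Amat ρ γ p H ξ = coeffMat ρ γ p H ξ * constraintMat H ξ := by
  simp only [Amat, hHξ, sub_zero]
  ext i j
  fin_cases i <;> fin_cases j <;>
    simp [coeffMat, constraintMat, mul_apply, Fin.sum_univ_two] <;> ring

theorem ker_coeffMat_eq_bot (hρ : ρ ≠ 0) (hξ : ξ ≠ 0) :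
    LinearMap.ker (coeffMat ρ γ p H ξ).mulVecLin = ⊥ := by
  refine LinearMap.ker_eq_bot'.mpr fun w hw => ?_
  have hrow (i : Fin 8) : (coeffMat ρ γ p H ξ *ᵥ w) i = 0 := congrFun hw i
  have h0 : ρ * w 0 = 0 := by simpa [coeffMat, mulVec, dotProduct] using hrow 0
  have h1 : dot3 ξ ξ / ρ * w 1 = 0 := by
    have h1 := hrow 1; have h2 := hrow 2; have h3 := hrow 3
    simp [coeffMat, mulVec, dotProduct, -mul_eq_zero, -div_eq_zero_iff] at h1 h2 h3
    simp only [dot3]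
    linear_combination ξ 0 * h1 + ξ 1 * h2 + ξ 2 * h3
  ext i
  fin_cases i
  · simpa [hρ] using h0
  · simpa [dot3_self_ne_zero hξ, hρ] using h1

theorem constraintMat_mulVec_eq_zero_iff (v : Fin 8 → ℝ) :
    constraintMat H ξ *ᵥ v = 0 ↔
      ξ 0 * v 1 + ξ 1 * v 2 + ξ 2 * v 3 = 0 ∧ v 7 = -(H 0 * v 4 + H 1 * v 5 + H 2 * v 6) := by
  simp [constraintMat, funext_iff, Fin.forall_fin_two, dotProduct, Fin.sum_univ_eight]
  exact fun _ => by constructor <;> intro h <;> linarith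

theorem constraintMat_mulVecLin_surjective (hξ : ξ ≠ 0) :
    Function.Surjective (constraintMat H ξ).mulVecLin := by
  intro w
  set t := w 0 / dot3 ξ ξ
  refine ⟨![0, t * ξ 0, t * ξ 1, t * ξ 2, 0, 0, 0, w 1], ?_⟩
  ext i
  fin_cases i
  · calc _ = t * dot3 ξ ξ := by
          simp [constraintMat, mulVec, dotProduct, Fin.sum_univ_eight, dot3]; ring
      _ = w 0 := div_mul_cancel₀ _ (dot3_self_ne_zero hξ)
  · simp [constraintMat, mulVec, dotProduct, Fin.sum_univ_eight]

end

theorem stmt14_general (ρ γ p : ℝ) (H ξ : Fin 3 → ℝ)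
    (hρ : 0 < ρ)
    (hξ : ξ ≠ 0) (hHξ : dot3 H ξ = 0) :
    (∀ v : Fin 8 → ℝ,
      Amat ρ γ p H ξ *ᵥ v = 0 ↔
        (ξ 0 * v 1 + ξ 1 * v 2 + ξ 2 * v 3 = 0 ∧
         v 7 = -(H 0 * v 4 + H 1 * v 5 + H 2 * v 6))) ∧
    Module.finrank ℝ (LinearMap.ker (Amat ρ γ p H ξ).mulVecLin) = 6 := by
  have hker : LinearMap.ker (Amat ρ γ p H ξ).mulVecLin =
      LinearMap.ker (constraintMat H ξ).mulVecLin := by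
    rw [Amat_eq_coeffMat_mul_constraintMat hHξ,
      Matrix.ker_mulVecLin_mul_of_ker_eq_bot (ker_coeffMat_eq_bot hρ.ne' hξ)]
  refine ⟨fun v => ?_, ?_⟩
  · rw [← Matrix.mulVecLin_apply, ← LinearMap.mem_ker, hker, LinearMap.mem_ker,
      Matrix.mulVecLin_apply, constraintMat_mulVec_eq_zero_iff]
  · have h := Matrix.finrank_ker_mulVecLin_add_card_of_surjective
      (constraintMat_mulVecLin_surjective (H := H) hξ)
    rw [hker]
    simp only [Fintype.card_fin] at h
    omega

/-- If `ξ ≠ 0` and `H·ξ = 0`, then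
`ker A(ξ) = {(ρ̇,u̇,Ḣ,ṗ) : ξ·u̇ = 0 ∧ ṗ = −H·Ḣ}` and this kernel has dimension
exactly `6`. -/
theorem stmt14 (ρ γ p : ℝ) (H ξ : Fin 3 → ℝ)
    (hρ : 0 < ρ) (hγp : 0 < γ * p)
    (hξ : ξ ≠ 0) (hHξ : dot3 H ξ = 0) :
    (∀ v : Fin 8 → ℝ,
      Amat ρ γ p H ξ *ᵥ v = 0 ↔
        (ξ 0 * v 1 + ξ 1 * v 2 + ξ 2 * v 3 = 0 ∧
         v 7 = -(H 0 * v 4 + H 1 * v 5 + H 2 * v 6))) ∧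
    Module.finrank ℝ (LinearMap.ker (Amat ρ γ p H ξ).mulVecLin) = 6 :=
  stmt14_general ρ γ p H ξ hρ hξ hHξ
end
end

section
/- Assume in addition that H ≠ 0, |H|² ≠ γp, ξ ≠ 0, ξ×H = 0, and τ ∈ ℝ satisfies ρτ² = |H|²|ξ|². Then the kernel of the 8×8 matrix q(τ,ξ) = τ·Id₈ + A(ξ) has dimension exactly 2. (This is the statement that at the uniaxial intersection Σ₂ = {τ² = |H|²|ξ|²/ρ, ξ×H = 0} the fiber of the kernel of the principal symbol is two-dimensional.) -/
open Matrix

noncomputable section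

@[simp] lemma vec8_at5 {α : Type*} (a b c d e f g h : α) : (![a,b,c,d,e,f,g,h] : Fin 8 → α) 5 = f := rfl
@[simp] lemma vec8_at6 {α : Type*} (a b c d e f g h : α) : (![a,b,c,d,e,f,g,h] : Fin 8 → α) 6 = g := rfl
@[simp] lemma vec8_at7 {α : Type*} (a b c d e f g h : α) : (![a,b,c,d,e,f,g,h] : Fin 8 → α) 7 = h := rfl

/-- The linear functional `w ↦ ξ·w` on `ℝ³`. -/
def xiDot (ξ : Fin 3 → ℝ) : (Fin 3 → ℝ) →ₗ[ℝ] ℝ where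
  toFun w := ξ 0 * w 0 + ξ 1 * w 1 + ξ 2 * w 2
  map_add' a b := by simp; ring
  map_smul' c a := by simp; ring

/-- The parametrization of the kernel. -/
def phi8 (τ d : ℝ) : (Fin 3 → ℝ) →ₗ[ℝ] (Fin 8 → ℝ) where
  toFun w := ![0, τ * w 0, τ * w 1, τ * w 2, d * w 0, d * w 1, d * w 2, 0]
  map_add' a b := by funext i; fin_cases i <;> simp <;> ring
  map_smul' c a := by funext i; fin_cases i <;> simp <;> ring

set_option maxHeartbeats 1000000 in
/-- If `H ≠ 0`, `|H|² ≠ γp`, `ξ ≠ 0`, `ξ×H = 0`, and `ρτ² = |H|²|ξ|²`, then the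
kernel of `q(τ,ξ) = τ·Id₈ + A(ξ)` has dimension exactly `2`. -/
theorem stmt15 (ρ γ p : ℝ) (H ξ : Fin 3 → ℝ) (τ : ℝ)
    (hρ : 0 < ρ) (hγp : 0 < γ * p)
    (hH : H ≠ 0) (hHne : dot3 H H ≠ γ * p)
    (hξ : ξ ≠ 0) (hcross : cross3 ξ H = 0)
    (hτ : ρ * τ ^ 2 = dot3 H H * dot3 ξ ξ) :
    Module.finrank ℝ
      (LinearMap.ker
        (τ • (1 : Matrix (Fin 8) (Fin 8) ℝ) + Amat ρ γ p H ξ).mulVecLin) = 2 := by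
  have hρ0 : ρ ≠ 0 := ne_of_gt hρ
  have hc0 : ξ 1 * H 2 - ξ 2 * H 1 = 0 := by simpa [cross3] using congrFun hcross 0
  have hc1 : ξ 2 * H 0 - ξ 0 * H 2 = 0 := by simpa [cross3] using congrFun hcross 1
  have hc2 : ξ 0 * H 1 - ξ 1 * H 0 = 0 := by simpa [cross3] using congrFun hcross 2
  -- positivity of the norms
  have hS : 0 < dot3 ξ ξ := by
    obtain ⟨i, hi⟩ : ∃ i, ξ i ≠ 0 := by
      by_contra hco; push_neg at hco; exact hξ (funext hco)
    have h0 := mul_self_nonneg (ξ 0); have h1 := mul_self_nonneg (ξ 1)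
    have h2 := mul_self_nonneg (ξ 2)
    fin_cases i <;> · simp at hi; have h3 := mul_self_pos.mpr hi; simp only [dot3]; nlinarith
  have hN : 0 < dot3 H H := by
    obtain ⟨i, hi⟩ : ∃ i, H i ≠ 0 := by
      by_contra hco; push_neg at hco; exact hH (funext hco)
    have h0 := mul_self_nonneg (H 0); have h1 := mul_self_nonneg (H 1)
    have h2 := mul_self_nonneg (H 2)
    fin_cases i <;> · simp at hi; have h3 := mul_self_pos.mpr hi; simp only [dot3]; nlinarith
  set d : ℝ := dot3 H ξ with hdDef
  have hd2 : d * d = dot3 H H * dot3 ξ ξ := by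
    simp only [hdDef, dot3]
    linear_combination (ξ 2 * H 1 - ξ 1 * H 2) * hc0 + (ξ 0 * H 2 - ξ 2 * H 0) * hc1 +
      (ξ 1 * H 0 - ξ 0 * H 1) * hc2
  have hNS : 0 < dot3 H H * dot3 ξ ξ := mul_pos hN hS
  have hd0 : d ≠ 0 := by
    intro h; rw [h] at hd2; exact absurd hd2.symm (ne_of_gt (by simpa using hNS))
  have hτ0 : τ ≠ 0 := by
    intro h; rw [h] at hτ; simp at hτ; rcases hτ with h1 | h1 <;> nlinarith
  -- key: the kernel is the image of the plane ξ⊥ under phi8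
  have hker : LinearMap.ker (τ • (1 : Matrix (Fin 8) (Fin 8) ℝ) + Amat ρ γ p H ξ).mulVecLin
      = Submodule.map (phi8 τ d) (LinearMap.ker (xiDot ξ)) := by
    ext x
    simp only [LinearMap.mem_ker, Submodule.mem_map, Matrix.mulVecLin_apply]
    constructor
    · intro hx
      rw [Matrix.add_mulVec, Matrix.smul_mulVec, Matrix.one_mulVec] at hx
      have e0 := congrFun hx 0
      have e1 := congrFun hx 1
      have e2 := congrFun hx 2
      have e3 := congrFun hx 3
      have e4 := congrFun hx 4
      have e5 := congrFun hx 5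
      have e6 := congrFun hx 6
      have e7 := congrFun hx 7
      simp [Amat, Matrix.mulVec, dotProduct, Fin.sum_univ_eight, dot3] at e0
      simp [Amat, Matrix.mulVec, dotProduct, Fin.sum_univ_eight, dot3] at e1
      simp [Amat, Matrix.mulVec, dotProduct, Fin.sum_univ_eight, dot3] at e2
      simp [Amat, Matrix.mulVec, dotProduct, Fin.sum_univ_eight, dot3] at e3
      simp [Amat, Matrix.mulVec, dotProduct, Fin.sum_univ_eight, dot3] at e4
      simp [Amat, Matrix.mulVec, dotProduct, Fin.sum_univ_eight, dot3] at e5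
      simp [Amat, Matrix.mulVec, dotProduct, Fin.sum_univ_eight, dot3] at e6
      simp [Amat, Matrix.mulVec, dotProduct, Fin.sum_univ_eight, dot3] at e7
      -- ξ·h = 0
      have hxh : ξ 0 * x 4 + ξ 1 * x 5 + ξ 2 * x 6 = 0 := by
        have key : τ * (ξ 0 * x 4 + ξ 1 * x 5 + ξ 2 * x 6) = 0 := by
          linear_combination ξ 0 * e4 + ξ 1 * e5 + ξ 2 * e6
        rcases mul_eq_zero.mp key with h | h
        · exact absurd h hτ0
        · exact h
      -- H·h = 0
      have hHh : H 0 * x 4 + H 1 * x 5 + H 2 * x 6 = 0 := by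
        have key : dot3 ξ ξ * (H 0 * x 4 + H 1 * x 5 + H 2 * x 6) = 0 := by
          simp only [dot3]
          linear_combination (ξ 1 * x 6 - ξ 2 * x 5) * hc0 + (ξ 2 * x 4 - ξ 0 * x 6) * hc1 +
            (ξ 0 * x 5 - ξ 1 * x 4) * hc2 + (H 0 * ξ 0 + H 1 * ξ 1 + H 2 * ξ 2) * hxh
        rcases mul_eq_zero.mp key with h | h
        · exact absurd h (ne_of_gt hS)
        · exact h
      -- ξ·u = 0
      have hxu : ξ 0 * x 1 + ξ 1 * x 2 + ξ 2 * x 3 = 0 := by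
        have key : ((dot3 H H - γ * p) * dot3 ξ ξ) * (ξ 0 * x 1 + ξ 1 * x 2 + ξ 2 * x 3) = 0 := by
          simp only [dot3]
          have hτ' : ρ * τ ^ 2 = (H 0 * H 0 + H 1 * H 1 + H 2 * H 2) *
              (ξ 0 * ξ 0 + ξ 1 * ξ 1 + ξ 2 * ξ 2) := by simpa [dot3] using hτ
          linear_combination (norm := (field_simp; ring))
            (ρ * τ) * (ξ 0 * e1 + ξ 1 * e2 + ξ 2 * e3)
            - (ξ 0 * ξ 0 + ξ 1 * ξ 1 + ξ 2 * ξ 2) * e7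
            - (ξ 0 * x 1 + ξ 1 * x 2 + ξ 2 * x 3) * hτ'
            - τ * (ξ 0 * ξ 0 + ξ 1 * ξ 1 + ξ 2 * ξ 2) * hHh
            + τ * (H 0 * ξ 0 + H 1 * ξ 1 + H 2 * ξ 2) * hxh
        rcases mul_eq_zero.mp key with h | h
        · rcases mul_eq_zero.mp h with h' | h'
          · exact absurd (by linarith : dot3 H H = γ * p) hHne
          · exact absurd h' (ne_of_gt hS)
        · exact h
      have hq : x 7 = 0 := by
        have key : τ * x 7 = 0 := by linear_combination e7 - γ * p * hxu
        rcases mul_eq_zero.mp key with h | h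
        · exact absurd h hτ0
        · exact h
      have hr : x 0 = 0 := by
        have key : τ * x 0 = 0 := by linear_combination e0 - ρ * hxu
        rcases mul_eq_zero.mp key with h | h
        · exact absurd h hτ0
        · exact h
      have f0 : τ * x 4 = d * x 1 := by
        simp only [hdDef, dot3]; linear_combination e4 - H 0 * hxu
      have f1 : τ * x 5 = d * x 2 := by
        simp only [hdDef, dot3]; linear_combination e5 - H 1 * hxu
      have f2 : τ * x 6 = d * x 3 := by
        simp only [hdDef, dot3]; linear_combination e6 - H 2 * hxu
      refine ⟨![x 4 / d, x 5 / d, x 6 / d], ?_, ?_⟩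
      · show xiDot ξ _ = 0
        simp only [xiDot, LinearMap.coe_mk, AddHom.coe_mk, Matrix.cons_val_zero,
          Matrix.cons_val_one, Matrix.head_cons, Matrix.cons_val_two, Matrix.vecTail,
          Matrix.vecHead, Function.comp, Matrix.cons_val_succ]
        field_simp
        linear_combination hxh
      · funext i
        fin_cases i <;>
          simp [phi8, Fin.isValue, Fin.zero_eta, Fin.mk_one, Fin.reduceFinMk]
        · exact hr.symm
        · field_simp; linear_combination f0
        · field_simp; linear_combination f1
        · field_simp; linear_combination f2
        · field_simp
        · field_simp
        · field_simp
        · exact hq.symm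
    · rintro ⟨w, hw, rfl⟩
      have hw' : ξ 0 * w 0 + ξ 1 * w 1 + ξ 2 * w 2 = 0 := hw
      have hHw : H 0 * w 0 + H 1 * w 1 + H 2 * w 2 = 0 := by
        have key : dot3 ξ ξ * (H 0 * w 0 + H 1 * w 1 + H 2 * w 2) = 0 := by
          simp only [dot3]
          linear_combination (ξ 1 * w 2 - ξ 2 * w 1) * hc0 + (ξ 2 * w 0 - ξ 0 * w 2) * hc1 +
            (ξ 0 * w 1 - ξ 1 * w 0) * hc2 + (H 0 * ξ 0 + H 1 * ξ 1 + H 2 * ξ 2) * hw'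
        rcases mul_eq_zero.mp key with h | h
        · exact absurd h (ne_of_gt hS)
        · exact h
      have hdd : d = H 0 * ξ 0 + H 1 * ξ 1 + H 2 * ξ 2 := by simp [hdDef, dot3]
      rw [Matrix.add_mulVec, Matrix.smul_mulVec, Matrix.one_mulVec]
      funext i
      fin_cases i <;>
        simp [Amat, phi8, Matrix.mulVec, dotProduct, Fin.sum_univ_eight, dot3,
          Fin.isValue, Fin.zero_eta, Fin.mk_one, Fin.reduceFinMk]
      · linear_combination ρ * τ * hw'
      · linear_combination (norm := (field_simp; ring))
          (w 0 * hτ - w 0 * hd2 + d * ξ 0 * hHw) / ρ + w 0 * d * hdd / ρ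
      · linear_combination (norm := (field_simp; ring)) (w 1 * hτ - w 1 * hd2 + d * ξ 1 * hHw) / ρ + w 1 * d * hdd / ρ
      · linear_combination (norm := (field_simp; ring)) (w 2 * hτ - w 2 * hd2 + d * ξ 2 * hHw) / ρ + w 2 * d * hdd / ρ
      · linear_combination τ * H 0 * hw' + τ * w 0 * hdd
      · linear_combination τ * H 1 * hw' + τ * w 1 * hdd
      · linear_combination τ * H 2 * hw' + τ * w 2 * hdd
      · linear_combination γ * p * τ * hw'
  rw [hker]
  -- phi8 is injective
  have hinj : Function.Injective (phi8 τ d) := by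
    rw [← LinearMap.ker_eq_bot]
    ext w
    simp only [LinearMap.mem_ker, Submodule.mem_bot]
    constructor
    · intro h
      funext i
      fin_cases i
      · have := congrFun h 4
        simp only [phi8, LinearMap.coe_mk, AddHom.coe_mk, Matrix.cons_val_four,
          Matrix.vecTail, Matrix.vecHead, Function.comp, Pi.zero_apply, Fin.isValue] at this
        simpa [hd0] using this
      · have := congrFun h 5
        simp only [phi8, LinearMap.coe_mk, AddHom.coe_mk, vec8_at5, Pi.zero_apply] at this
        simpa [hd0] using this
      · have := congrFun h 6
        simp only [phi8, LinearMap.coe_mk, AddHom.coe_mk, vec8_at6, Pi.zero_apply] at this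
        simpa [hd0] using this
    · rintro rfl
      simp only [map_zero]
  rw [← (Submodule.equivMapOfInjective _ hinj (LinearMap.ker (xiDot ξ))).finrank_eq]
  -- the kernel of ξ· is two-dimensional
  have hsurj : Function.Surjective (xiDot ξ) := by
    intro r
    refine ⟨(r / dot3 ξ ξ) • ξ, ?_⟩
    have hS' : ξ 0 * ξ 0 + ξ 1 * ξ 1 + ξ 2 * ξ 2 ≠ 0 := by
      have := hS; simp only [dot3] at this; exact ne_of_gt this
    simp only [xiDot, LinearMap.coe_mk, AddHom.coe_mk, Pi.smul_apply, smul_eq_mul, dot3]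
    field_simp
    have hS'' : ξ 0 ^ 2 + ξ 1 ^ 2 + ξ 2 ^ 2 ≠ 0 := by rw [pow_two, pow_two, pow_two]; exact hS'
    exact mul_div_cancel_right₀ r hS''
  have hrn := LinearMap.finrank_range_add_finrank_ker (xiDot ξ)
  rw [LinearMap.range_eq_top.mpr hsurj, finrank_top] at hrn
  simp only [Module.finrank_self, Module.finrank_pi, Fintype.card_fin] at hrn
  omega
end
end

section
/- Let S be the 8×8 real matrix (in the coordinates (ρ̇,u̇₁,u̇₂,u̇₃,Ḣ₁,Ḣ₂,Ḣ₃,ṗ)) with entries S₁₁ = γp, S₁₈ = S₈₁ = −ρ, S₂₂ = S₃₃ = S₄₄ = ρ, S₅₅ = S₆₆ = S₇₇ = 1, S₈₈ = (1+ρ²)/(γp), and all other entries 0. Then S is symmetric and positive definite, and for every ξ ∈ ℝ³ the matrix S·A(ξ) is symmetric. (Hence the linearized ideal MHD system is symmetric hyperbolic with symmetrizer S.) -/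
open Matrix

noncomputable section

section auxLemmas
variable {α : Type*} {m : ℕ}

lemma mhd_cons_val_five (x : α) (u : Fin m.succ.succ.succ.succ.succ → α) :
    vecCons x u 5 = vecHead (vecTail (vecTail (vecTail (vecTail u)))) := rfl

lemma mhd_cons_val_six (x : α) (u : Fin m.succ.succ.succ.succ.succ.succ → α) :
    vecCons x u 6 = vecHead (vecTail (vecTail (vecTail (vecTail (vecTail u))))) := rfl

lemma mhd_cons_val_seven (x : α) (u : Fin m.succ.succ.succ.succ.succ.succ.succ → α) :
    vecCons x u 7 = vecHead (vecTail (vecTail (vecTail (vecTail (vecTail (vecTail u)))))) := rfl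

end auxLemmas

/-- The symmetrizer `S` of the linearized ideal MHD system. -/
def Smat (ρ γ p : ℝ) : Matrix (Fin 8) (Fin 8) ℝ :=
  !![γ * p, 0, 0, 0, 0, 0, 0, -ρ;
     0, ρ, 0, 0, 0, 0, 0, 0;
     0, 0, ρ, 0, 0, 0, 0, 0;
     0, 0, 0, ρ, 0, 0, 0, 0;
     0, 0, 0, 0, 1, 0, 0, 0;
     0, 0, 0, 0, 0, 1, 0, 0;
     0, 0, 0, 0, 0, 0, 1, 0;
     -ρ, 0, 0, 0, 0, 0, 0, (1 + ρ ^ 2) / (γ * p)]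

set_option maxHeartbeats 8000000 in
/-- `S` is symmetric positive definite and `S·A(ξ)` is symmetric for every
`ξ`: the linearized ideal MHD system is symmetric hyperbolic with
symmetrizer `S`. -/
theorem stmt16 (ρ γ p : ℝ) (H : Fin 3 → ℝ)
    (hρ : 0 < ρ) (hγp : 0 < γ * p) :
    (Smat ρ γ p)ᵀ = Smat ρ γ p ∧
    (Smat ρ γ p).PosDef ∧
    ∀ ξ : Fin 3 → ℝ,
      (Smat ρ γ p * Amat ρ γ p H ξ)ᵀ = Smat ρ γ p * Amat ρ γ p H ξ := by
  have hρ0 : ρ ≠ 0 := ne_of_gt hρ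
  have hγp0 : γ * p ≠ 0 := ne_of_gt hγp
  have hγ0 : γ ≠ 0 := left_ne_zero_of_mul hγp0
  have hp0 : p ≠ 0 := right_ne_zero_of_mul hγp0
  refine ⟨?_, ?_, ?_⟩
  · ext i j
    fin_cases i <;> fin_cases j <;> rfl
  · rw [Matrix.posDef_iff_dotProduct_mulVec]
    constructor
    · show (Smat ρ γ p)ᴴ = _
      ext i j
      fin_cases i <;> fin_cases j <;> rfl
    · intro x hx
      have hx' : ∃ i, x i ≠ 0 := Function.ne_iff.mp hx
      have expand : dotProduct (star x) (Smat ρ γ p *ᵥ x) =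
          γ * p * x 0 ^ 2 - 2 * ρ * x 0 * x 7 + ρ * (x 1 ^ 2 + x 2 ^ 2 + x 3 ^ 2)
          + (x 4 ^ 2 + x 5 ^ 2 + x 6 ^ 2) + (1 + ρ ^ 2) / (γ * p) * x 7 ^ 2 := by
        simp [Smat, dotProduct, Matrix.mulVec, Fin.sum_univ_eight, Matrix.vecHead,
          Matrix.vecTail, mhd_cons_val_five, mhd_cons_val_six, mhd_cons_val_seven]
        ring
      rw [expand]
      have key : γ * p * (γ * p * x 0 ^ 2 - 2 * ρ * x 0 * x 7 + ρ * (x 1 ^ 2 + x 2 ^ 2 + x 3 ^ 2)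
          + (x 4 ^ 2 + x 5 ^ 2 + x 6 ^ 2) + (1 + ρ ^ 2) / (γ * p) * x 7 ^ 2) =
          (γ * p * x 0 - ρ * x 7) ^ 2 + x 7 ^ 2
          + γ * p * (ρ * (x 1 ^ 2 + x 2 ^ 2 + x 3 ^ 2) + (x 4 ^ 2 + x 5 ^ 2 + x 6 ^ 2)) := by
        field_simp
        ring
      have hpos : 0 < γ * p * (γ * p * x 0 ^ 2 - 2 * ρ * x 0 * x 7
          + ρ * (x 1 ^ 2 + x 2 ^ 2 + x 3 ^ 2)
          + (x 4 ^ 2 + x 5 ^ 2 + x 6 ^ 2) + (1 + ρ ^ 2) / (γ * p) * x 7 ^ 2) := by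
        rw [key]
        obtain ⟨i, hi⟩ := hx'
        have h0 : ∀ y : ℝ, y ≠ 0 → 0 < y ^ 2 := fun y hy => by positivity
        have sqs : (0:ℝ) ≤ (γ * p * x 0 - ρ * x 7) ^ 2 := sq_nonneg _
        have s1 := sq_nonneg (x 1); have s2 := sq_nonneg (x 2); have s3 := sq_nonneg (x 3)
        have s4 := sq_nonneg (x 4); have s5 := sq_nonneg (x 5); have s6 := sq_nonneg (x 6)
        have s7 := sq_nonneg (x 7)
        fin_cases i
        · replace hi : x 0 ≠ 0 := hi
          rcases eq_or_ne (x 7) 0 with h7 | h7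
          · rw [h7]
            nlinarith [mul_pos (mul_pos hγp hγp) (h0 _ hi), mul_pos hρ hγp, mul_pos hγp hρ,
              hγp, hρ]
          · nlinarith [h0 _ h7, mul_pos hρ hγp, mul_pos hγp hρ, hγp, hρ]
        · replace hi : x 1 ≠ 0 := hi
          nlinarith [mul_pos (mul_pos hγp hρ) (h0 _ hi), mul_pos hγp hρ, hγp, hρ]
        · replace hi : x 2 ≠ 0 := hi
          nlinarith [mul_pos (mul_pos hγp hρ) (h0 _ hi), mul_pos hγp hρ, hγp, hρ]
        · replace hi : x 3 ≠ 0 := hi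
          nlinarith [mul_pos (mul_pos hγp hρ) (h0 _ hi), mul_pos hγp hρ, hγp, hρ]
        · replace hi : x 4 ≠ 0 := hi
          nlinarith [mul_pos hγp (h0 _ hi), mul_pos hγp hρ, hγp, hρ]
        · replace hi : x 5 ≠ 0 := hi
          nlinarith [mul_pos hγp (h0 _ hi), mul_pos hγp hρ, hγp, hρ]
        · replace hi : x 6 ≠ 0 := hi
          nlinarith [mul_pos hγp (h0 _ hi), mul_pos hγp hρ, hγp, hρ]
        · replace hi : x 7 ≠ 0 := hi
          nlinarith [h0 _ hi, mul_pos hρ hγp, mul_pos hγp hρ, hγp, hρ]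
      nlinarith [hpos, hγp, mul_pos hγp hpos]
  · intro ξ
    ext i j
    fin_cases i <;> fin_cases j <;>
      · simp [Smat, Amat, Matrix.mul_apply, Fin.sum_univ_eight, dot3,
          mhd_cons_val_five, mhd_cons_val_six, mhd_cons_val_seven]
        try norm_num [Matrix.vecHead, Matrix.vecTail]
        try field_simp
        try ring
end
end
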